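/- arXiv:1701.04267 — 6 statements merged into one kernel-verified Lean document; each statement's English description precedes it below -/
import Mathlib

section
/- Let (X,d) be a complete separable metric space and μ,ν ∈ P_X. Then the following statements are equivalent: (i) π(μ,ν) = 1; (ii) inf{d(x,y) | x ∈ S_μ, y ∈ S_ν} ≥ 1; (iii) S_ν ∩ S_μ¹ = ∅; (iv) S_μ ∩ S_ν¹ = ∅. -/
open MeasureTheory Metric Set TopologicalSpace
open ENNReal

/-- The (one-sided) Lévy–Prokhorov distance of two Borel probability measures. -/
noncomputable def LPdist {X : Type*} [MetricSpace X] [MeasurableSpace X]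
    (μ ν : ProbabilityMeasure X) : ℝ :=
  sInf {ε : ℝ | 0 < ε ∧ ∀ A : Set X, MeasurableSet A →
    (μ : Measure X) A ≤ (ν : Measure X) (thickening ε A) + ENNReal.ofReal ε}

/-- The s-Lévy–Prokhorov distance. -/
noncomputable def LPsdist {X : Type*} [MetricSpace X] [MeasurableSpace X]
    (s : ℝ) (μ ν : ProbabilityMeasure X) : ℝ :=
  sInf {ε : ℝ | 0 < ε ∧ ∀ A : Set X, MeasurableSet A →
    ENNReal.ofReal s * (μ : Measure X) A ≤
      ENNReal.ofReal s * (ν : Measure X) (thickening ε A) + ENNReal.ofReal ε}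

/-- The support of a Borel probability measure. -/
def mSupport {X : Type*} [MetricSpace X] [MeasurableSpace X]
    (μ : ProbabilityMeasure X) : Set X :=
  {x : X | ∀ r : ℝ, 0 < r → 0 < (μ : Measure X) (ball x r)}

/-- The Dirac measure as a probability measure. -/
noncomputable def diracPM {X : Type*} [MeasurableSpace X] (x : X) : ProbabilityMeasure X :=
  ⟨Measure.dirac x, inferInstance⟩

/-- Finitely supported probability measures: finite convex combinations of Dirac measures. -/
def IsFinitelySupported {X : Type*} [MeasurableSpace X] (μ : ProbabilityMeasure X) : Prop :=
  ∃ (s : Finset X) (w : X → ℝ), (∀ x ∈ s, 0 < w x) ∧ (∑ x ∈ s, w x = 1) ∧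
    (μ : Measure X) = ∑ x ∈ s, ENNReal.ofReal (w x) • Measure.dirac x

/-- The unit distance set of a set of probability measures. -/
def unitDistSet {X : Type*} [MetricSpace X] [MeasurableSpace X]
    (𝒜 : Set (ProbabilityMeasure X)) : Set (ProbabilityMeasure X) :=
  {ν | ∀ μ ∈ 𝒜, LPdist μ ν = 1}

/-- The witness function. -/
noncomputable def witness {X : Type*} [MetricSpace X] [MeasurableSpace X]
    (μ : ProbabilityMeasure X) (x : X) : ℝ :=
  LPdist (diracPM x) μ

/-- The s-witness function. -/
noncomputable def switness {X : Type*} [MetricSpace X] [MeasurableSpace X]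
    (s : ℝ) (μ : ProbabilityMeasure X) (x : X) : ℝ :=
  LPsdist s (diracPM x) μ

section aux
set_option linter.unusedSectionVars false
variable {X : Type*} [MetricSpace X] [MeasurableSpace X] [BorelSpace X]

lemma isClosed_mSupport (μ : ProbabilityMeasure X) : IsClosed (mSupport μ) := by
  rw [← isOpen_compl_iff, Metric.isOpen_iff]
  intro x hx
  simp only [mSupport, mem_compl_iff, mem_setOf_eq, not_forall, not_lt] at hx
  obtain ⟨r, hr, h0⟩ := hx
  have h0' : (μ : Measure X) (ball x r) = 0 := le_antisymm h0 bot_le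
  refine ⟨r/2, by linarith, fun z hz => ?_⟩
  simp only [mSupport, mem_compl_iff, mem_setOf_eq, not_forall, not_lt]
  refine ⟨r/2, ⟨by linarith, le_of_eq ?_⟩⟩
  refine measure_mono_null (fun w hw => ?_) h0'
  have h3 : dist w x ≤ dist w z + dist z x := dist_triangle _ _ _
  rw [mem_ball] at *
  linarith [hw, hz]

lemma compl_mSupport_null [SeparableSpace X] (μ : ProbabilityMeasure X) :
    (μ : Measure X) (mSupport μ)ᶜ = 0 := by
  haveI : SecondCountableTopology X := UniformSpace.secondCountable_of_separable X
  apply measure_null_of_locally_null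
  intro x hx
  simp only [mSupport, mem_compl_iff, mem_setOf_eq, not_forall, not_lt] at hx
  obtain ⟨r, hr, h0⟩ := hx
  exact ⟨ball x r, nhdsWithin_le_nhds (ball_mem_nhds x hr), le_antisymm h0 bot_le⟩

lemma mSupport_full [SeparableSpace X] (μ : ProbabilityMeasure X) :
    (μ : Measure X) (mSupport μ) = 1 := by
  refine le_antisymm prob_le_one ?_
  calc (1 : ℝ≥0∞) = (μ : Measure X) univ := measure_univ.symm
    _ = (μ : Measure X) (mSupport μ ∪ (mSupport μ)ᶜ) := by rw [union_compl_self]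
    _ ≤ (μ : Measure X) (mSupport μ) + (μ : Measure X) (mSupport μ)ᶜ := measure_union_le _ _
    _ = (μ : Measure X) (mSupport μ) := by rw [compl_mSupport_null, add_zero]

lemma inter_thickening_eq_empty_iff (s t : Set X) :
    s ∩ thickening 1 t = ∅ ↔ ∀ x ∈ s, ∀ y ∈ t, 1 ≤ edist x y := by
  constructor
  · intro h x hx y hy
    by_contra hlt
    push_neg at hlt
    have hxth : x ∈ thickening 1 t := by
      rw [mem_thickening_iff_infEdist_lt, ENNReal.ofReal_one]
      exact lt_of_le_of_lt (EMetric.infEdist_le_edist_of_mem hy) hlt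
    exact (eq_empty_iff_forall_notMem.1 h x) ⟨hx, hxth⟩
  · intro h
    rw [eq_empty_iff_forall_notMem]
    rintro x ⟨hx, hx'⟩
    rw [mem_thickening_iff_infEdist_lt, ENNReal.ofReal_one] at hx'
    obtain ⟨y, hy, hlt⟩ := EMetric.infEdist_lt_iff.1 hx'
    exact absurd hlt (not_lt.2 (h x hx y hy))

end aux

/-- Proposition 2.1: characterisations of "distance one" for the Lévy–Prokhorov metric on a
complete separable metric space. -/
theorem distance_one_tfae {X : Type*} [MetricSpace X] [CompleteSpace X] [SeparableSpace X]
    [MeasurableSpace X] [BorelSpace X] (μ ν : ProbabilityMeasure X) :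
    List.TFAE
      [ LPdist μ ν = 1,
        1 ≤ ⨅ (x : mSupport μ) (y : mSupport ν), edist (x : X) (y : X),
        mSupport ν ∩ thickening 1 (mSupport μ) = ∅,
        mSupport μ ∩ thickening 1 (mSupport ν) = ∅ ] := by
  tfae_have 2 ↔ 3 := by
    rw [inter_thickening_eq_empty_iff]
    simp only [le_iInf_iff]
    constructor
    · rintro h y hy x hx
      rw [edist_comm]
      exact h ⟨x, hx⟩ ⟨y, hy⟩
    · rintro h ⟨x, hx⟩ ⟨y, hy⟩
      rw [edist_comm]
      exact h y hy x hx
  tfae_have 3 ↔ 4 := by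
    rw [inter_thickening_eq_empty_iff, inter_thickening_eq_empty_iff]
    constructor <;> intro h a ha b hb <;> rw [edist_comm] <;> exact h b hb a ha
  tfae_have 3 → 1 := by
    intro h3
    refine le_antisymm ?_ ?_
    · refine csInf_le ⟨0, fun t ht => ht.1.le⟩ ⟨one_pos, fun A hA => ?_⟩
      calc (μ : Measure X) A ≤ ENNReal.ofReal 1 := by
            rw [ENNReal.ofReal_one]; exact prob_le_one
        _ ≤ (ν : Measure X) (thickening 1 A) + ENNReal.ofReal 1 := self_le_add_left _ _
    · refine le_csInf ⟨1, one_pos, fun A hA => ?_⟩ ?_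
      · calc (μ : Measure X) A ≤ ENNReal.ofReal 1 := by
              rw [ENNReal.ofReal_one]; exact prob_le_one
          _ ≤ (ν : Measure X) (thickening 1 A) + ENNReal.ofReal 1 := self_le_add_left _ _
      · rintro ε ⟨hε, hεA⟩
        by_contra hlt
        push_neg at hlt
        have hμ := hεA (mSupport μ) (isClosed_mSupport μ).measurableSet
        rw [mSupport_full] at hμ
        have hthick : (ν : Measure X) (thickening ε (mSupport μ)) = 0 := by
          refine measure_mono_null ?_ (compl_mSupport_null ν)
          intro z hz hzS
          exact (eq_empty_iff_forall_notMem.1 h3 z) ⟨hzS, thickening_mono hlt.le _ hz⟩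
        rw [hthick, zero_add] at hμ
        have : (1 : ℝ≥0∞) < 1 := lt_of_le_of_lt hμ (by rwa [ENNReal.ofReal_lt_one])
        exact absurd this (lt_irrefl _)
  tfae_have 1 → 3 := by
    intro h1
    by_contra h3
    rw [← ne_eq, ← nonempty_iff_ne_empty] at h3
    obtain ⟨y, hyν, hyth⟩ := h3
    rw [mem_thickening_iff] at hyth
    obtain ⟨x, hxμ, hxy⟩ := hyth
    set D := dist y x with hD
    have hD0 : 0 ≤ D := dist_nonneg
    set r := (1 - D)/4 with hr
    have hr0 : 0 < r := by rw [hr]; linarith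
    have hα : 0 < (μ : Measure X) (ball x r) := hxμ r hr0
    have hβ : 0 < (ν : Measure X) (ball y r) := hyν r hr0
    set m := min ((μ : Measure X) (ball x r)) ((ν : Measure X) (ball y r)) with hm
    have hm0 : 0 < m := lt_min hα hβ
    have hmtop : m ≠ ⊤ := ne_top_of_le_ne_top one_ne_top ((min_le_left _ _).trans prob_le_one)
    set c := min m.toReal r with hc
    have hc0 : 0 < c := lt_min (ENNReal.toReal_pos hm0.ne' hmtop) hr0
    have hcr : c ≤ r := min_le_right _ _
    have hcm : ENNReal.ofReal c ≤ m :=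
      ENNReal.ofReal_le_of_le_toReal (min_le_left _ _)
    set ε := 1 - c/2 with hε
    have hε1 : ε < 1 := by rw [hε]; linarith
    have hε0 : 0 < ε := by rw [hε, hr] at *; linarith
    have hhalf : ENNReal.ofReal (c/2) ≤ m := le_trans
      (ENNReal.ofReal_le_ofReal (by linarith)) hcm
    have hmem : ε ∈ {ε : ℝ | 0 < ε ∧ ∀ A : Set X, MeasurableSet A →
        (μ : Measure X) A ≤ (ν : Measure X) (thickening ε A) + ENNReal.ofReal ε} := by
      refine ⟨hε0, fun A hA => ?_⟩
      by_cases hcase : (μ : Measure X) A ≤ ENNReal.ofReal ε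
      · exact hcase.trans (self_le_add_left _ _)
      · push_neg at hcase
        have hAc : (μ : Measure X) Aᶜ ≤ ENNReal.ofReal (c/2) := by
          rw [measure_compl hA (measure_ne_top _ _), measure_univ]
          calc 1 - (μ : Measure X) A ≤ 1 - ENNReal.ofReal ε := tsub_le_tsub_left hcase.le 1
            _ = ENNReal.ofReal (c/2) := by
                rw [← ENNReal.ofReal_one, ← ENNReal.ofReal_sub _ hε0.le]
                congr 1
                rw [hε]; ring
        have hball : ¬ ball x r ⊆ Aᶜ := by
          intro hsub
          have h1' : (μ : Measure X) (ball x r) ≤ ENNReal.ofReal (c/2) :=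
            (measure_mono hsub).trans hAc
          have h2' : ENNReal.ofReal (c/2) < (μ : Measure X) (ball x r) :=
            lt_of_lt_of_le (ENNReal.ofReal_lt_ofReal_iff hc0 |>.2 (by linarith))
              (hcm.trans (min_le_left _ _))
          exact absurd h1' h2'.not_ge
        obtain ⟨a, har, haA⟩ : ∃ a ∈ ball x r, a ∈ A := by
          rcases not_subset.1 hball with ⟨a, ha, ha'⟩
          exact ⟨a, ha, not_not.1 ha'⟩
        have hsub2 : ball y r ⊆ thickening ε A := by
          intro z hz
          rw [mem_thickening_iff]
          refine ⟨a, haA, ?_⟩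
          have ht : dist z a ≤ dist z y + dist y x + dist x a := dist_triangle4 _ _ _ _
          rw [mem_ball] at hz har
          rw [dist_comm x a] at ht
          rw [hε]
          have h5 : dist z a < r + D + r := by linarith
          rw [hr] at h5
          linarith
        calc (μ : Measure X) A ≤ 1 := prob_le_one
          _ = ENNReal.ofReal (c/2) + ENNReal.ofReal ε := by
              rw [← ENNReal.ofReal_add (by linarith) hε0.le, hε]
              norm_num
          _ ≤ (ν : Measure X) (thickening ε A) + ENNReal.ofReal ε := by
              gcongr
              exact hhalf.trans ((min_le_right _ _).trans (measure_mono hsub2))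
    have hle : LPdist μ ν ≤ ε := csInf_le ⟨0, fun t ht => ht.1.le⟩ hmem
    rw [h1] at hle
    linarith
  tfae_finish
end

section
/- Let (X,d) be a complete separable metric space and μ ∈ P_X. Then the following three statements are equivalent: (i) ({μ}ᵘ)ᵘ = {μ}; (ii) there exists an x ∈ X such that μ = δ_x and such that for every y ∈ X, B₁(y) ⊆ B₁(x) implies x = y; (iii) the set ({μ}ᵘ)ᵘ has exactly one element. -/
open MeasureTheory Metric Set TopologicalSpace

/-!
Two probability measures are at Lévy–Prokhorov distance `1` exactly when their supports are at
distance at least `1` from each other. Consequently `{μ}ᵘᵘ` contains `δ_y` for every `y` in the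
support of `μ`, so `{μ}ᵘᵘ = {μ}` forces `μ = δ_x`. For a Dirac measure, `δ_y ∈ {δ_x}ᵘᵘ` as soon as
`B₁(y) ⊆ B₁(x)`, while every `c` in the support of some `ν ∈ {δ_x}ᵘᵘ` satisfies `B₁(c) ⊆ B₁(x)`
(test `ν` against `δ_b` for `b ∉ B₁(x)`); maximality of `B₁(x)` thus pins `{δ_x}ᵘᵘ` down to `{δ_x}`.
-/

open scoped ENNReal

local postfix:max "ᵘ" => unitDistSet

theorem ENNReal.one_le_ofReal_add {x : ℝ≥0∞} (hx : x ≠ ∞) {ε : ℝ} (h : 1 - x.toReal ≤ ε) :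
    1 ≤ ENNReal.ofReal ε + x :=
  calc (1 : ℝ≥0∞) = ENNReal.ofReal (1 - x.toReal + x.toReal) := by simp
    _ ≤ ENNReal.ofReal (1 - x.toReal) + ENNReal.ofReal x.toReal := ENNReal.ofReal_add_le
    _ ≤ ENNReal.ofReal ε + x := by rw [ENNReal.ofReal_toReal hx]; gcongr

namespace MeasureTheory.Measure

theorem support_dirac {X : Type*} [TopologicalSpace X] [T1Space X] [MeasurableSpace X]
    [MeasurableSingletonClass X] (x : X) : (dirac x).support = {x} := by
  ext y
  rw [mem_support_iff_forall, mem_singleton_iff]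
  refine ⟨fun h => ?_, fun hyx U hU => ?_⟩
  · by_contra hyx
    simpa using h _ (compl_singleton_mem_nhds hyx)
  · simp [dirac_apply_of_mem (hyx ▸ mem_of_mem_nhds hU)]

end MeasureTheory.Measure

section LevyProkhorov

variable {X : Type*} [MetricSpace X] [MeasurableSpace X]

theorem LPdist_le_of_forall {μ ν : ProbabilityMeasure X} {ε : ℝ} (hε : 0 < ε)
    (h : ∀ A, MeasurableSet A →
      (μ : Measure X) A ≤ (ν : Measure X) (thickening ε A) + ENNReal.ofReal ε) :
    LPdist μ ν ≤ ε :=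
  csInf_le ⟨0, fun _ hδ => hδ.1.le⟩ ⟨hε, h⟩

theorem LPdist_le_one (μ ν : ProbabilityMeasure X) : LPdist μ ν ≤ 1 :=
  LPdist_le_of_forall one_pos fun _ _ => prob_le_one.trans (by simp)

theorem one_le_LPdist {μ ν : ProbabilityMeasure X}
    (h : ∀ ε : ℝ, 0 < ε → ε < 1 → ∃ A, MeasurableSet A ∧
      (ν : Measure X) (thickening ε A) + ENNReal.ofReal ε < (μ : Measure X) A) :
    1 ≤ LPdist μ ν := by
  refine le_csInf ⟨1, one_pos, fun _ _ => prob_le_one.trans (by simp)⟩ fun ε ⟨hε, hA⟩ => ?_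
  by_contra! hε1
  obtain ⟨A, hAm, hlt⟩ := h ε hε hε1
  exact (hA A hAm).not_gt hlt

/-- A set meeting `ball a r` has an `ε`-thickening containing `ball b r'`; a set missing it has
`μ`-mass at most `1 - μ (ball a r)`. -/
theorem LPdist_lt_one_of_measure_ball_pos {μ ν : ProbabilityMeasure X} {a b : X} {r r' : ℝ}
    (ha : 0 < (μ : Measure X) (ball a r)) (hb : 0 < (ν : Measure X) (ball b r'))
    (hab : dist a b + r + r' < 1) : LPdist μ ν < 1 := by
  have hr : 0 < r := nonempty_ball.1 (nonempty_of_measure_ne_zero ha.ne')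
  have hr' : 0 < r' := nonempty_ball.1 (nonempty_of_measure_ne_zero hb.ne')
  set m := (μ : Measure X) (ball a r)
  set n := (ν : Measure X) (ball b r')
  have hm := ENNReal.toReal_pos ha.ne' (measure_ne_top _ (ball a r))
  have hn := ENNReal.toReal_pos hb.ne' (measure_ne_top _ (ball b r'))
  set ε := max (dist a b + r + r') (max (1 - m.toReal) (1 - n.toReal))
  have hεab : dist a b + r + r' ≤ ε := le_max_left _ _
  have hεm : 1 - m.toReal ≤ ε := (le_max_left _ _).trans (le_max_right _ _)
  have hεn : 1 - n.toReal ≤ ε := (le_max_right _ _).trans (le_max_right _ _)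
  have hε1 : ε < 1 := max_lt hab (max_lt (by linarith) (by linarith))
  refine (LPdist_le_of_forall (by positivity) fun A hA => ?_).trans_lt hε1
  by_cases hmeet : (A ∩ ball a r).Nonempty
  · obtain ⟨p, hpA, hpa⟩ := hmeet
    have hsub : ball b r' ⊆ thickening ε A := fun u hu =>
      mem_thickening_iff.2 ⟨p, hpA, lt_of_le_of_lt (dist_triangle4 u b a p) <| by
        rw [mem_ball] at hu hpa
        linarith [dist_comm a b, dist_comm a p]⟩
    calc (μ : Measure X) A ≤ 1 := prob_le_one
      _ ≤ ENNReal.ofReal ε + n := ENNReal.one_le_ofReal_add (measure_ne_top _ _) hεn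
      _ ≤ (ν : Measure X) (thickening ε A) + ENNReal.ofReal ε := by
        rw [add_comm]; exact add_le_add (measure_mono hsub) le_rfl
  · have hdisj : Disjoint A (ball a r) :=
      Set.disjoint_iff_inter_eq_empty.2 (not_nonempty_iff_eq_empty.1 hmeet)
    have hAm : (μ : Measure X) A + m ≤ ENNReal.ofReal ε + m :=
      calc (μ : Measure X) A + m = (μ : Measure X) (A ∪ ball a r) :=
            (measure_union' hdisj hA).symm
        _ ≤ 1 := prob_le_one
        _ ≤ ENNReal.ofReal ε + m := ENNReal.one_le_ofReal_add (measure_ne_top _ _) hεm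
    exact (ENNReal.le_of_add_le_add_right (measure_ne_top _ _) hAm).trans le_add_self

theorem LPdist_eq_one_iff [HereditarilyLindelofSpace X] [OpensMeasurableSpace X]
    {μ ν : ProbabilityMeasure X} :
    LPdist μ ν = 1 ↔
      ∀ a ∈ (μ : Measure X).support, ∀ b ∈ (ν : Measure X).support, 1 ≤ dist a b := by
  refine ⟨fun h a ha b hb => ?_, fun h => (LPdist_le_one μ ν).antisymm (one_le_LPdist ?_)⟩
  · by_contra! hab
    have hr : 0 < (1 - dist a b) / 3 := by linarith
    exact (LPdist_lt_one_of_measure_ball_pos (nhds_basis_ball.mem_measureSupport.1 ha _ hr)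
      (nhds_basis_ball.mem_measureSupport.1 hb _ hr) (by linarith)).ne h
  · intro ε _ hε1
    have hnull : (ν : Measure X) (thickening ε (μ : Measure X).support) = 0 := by
      refine measure_mono_null (show _ ⊆ (ν : Measure X).supportᶜ from fun b hb hbν => ?_)
        Measure.measure_compl_support
      obtain ⟨a, ha, hba⟩ := mem_thickening_iff.1 hb
      linarith [h a ha b hbν, dist_comm a b]
    refine ⟨(μ : Measure X).support, Measure.isClosed_support.measurableSet, ?_⟩
    rw [hnull, zero_add, (prob_compl_eq_zero_iff Measure.isClosed_support.measurableSet).1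
      Measure.measure_compl_support]
    exact ENNReal.ofReal_lt_one.2 hε1

theorem LPdist_eq_one_comm [HereditarilyLindelofSpace X] [OpensMeasurableSpace X]
    {μ ν : ProbabilityMeasure X} : LPdist μ ν = 1 ↔ LPdist ν μ = 1 := by
  rw [LPdist_eq_one_iff, LPdist_eq_one_iff]
  exact ⟨fun h a ha b hb => dist_comm a b ▸ h b hb a ha,
    fun h a ha b hb => dist_comm a b ▸ h b hb a ha⟩

theorem support_diracPM [OpensMeasurableSpace X] (x : X) :
    ((diracPM x : ProbabilityMeasure X) : Measure X).support = {x} :=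
  Measure.support_dirac x

theorem LPdist_diracPM_eq_one_iff [HereditarilyLindelofSpace X] [OpensMeasurableSpace X]
    {x : X} {ν : ProbabilityMeasure X} :
    LPdist (diracPM x) ν = 1 ↔ ∀ b ∈ (ν : Measure X).support, b ∉ ball x 1 := by
  simp [LPdist_eq_one_iff, support_diracPM, dist_comm x]

theorem diracPM_injective [OpensMeasurableSpace X] : Function.Injective (diracPM (X := X)) :=
  fun x y h => singleton_injective <| by rw [← support_diracPM, h, support_diracPM]

theorem eq_diracPM_of_support_subset [HereditarilyLindelofSpace X] [OpensMeasurableSpace X]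
    {ν : ProbabilityMeasure X} {x : X} (h : (ν : Measure X).support ⊆ {x}) : ν = diracPM x := by
  have hx : ∀ᵐ y ∂(ν : Measure X), y ∈ ({x} : Set X) :=
    Filter.mem_of_superset Measure.support_mem_ae h
  have hx1 : (ν : Measure X) {x} = 1 := (prob_compl_eq_zero_iff (measurableSet_singleton x)).1 hx
  ext1
  rw [← Measure.restrict_eq_self_of_ae_mem hx, Measure.restrict_singleton, hx1, one_smul]
  rfl

end LevyProkhorov

section UnitDistSet

variable {X : Type*} [MetricSpace X] [MeasurableSpace X] [HereditarilyLindelofSpace X]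
  [OpensMeasurableSpace X]

theorem mem_unitDistSet_unitDistSet_self (μ : ProbabilityMeasure X) : μ ∈ {μ}ᵘᵘ :=
  fun _ hρ => LPdist_eq_one_comm.1 (hρ μ rfl)

theorem diracPM_mem_unitDistSet_unitDistSet_of_mem_support {μ : ProbabilityMeasure X} {y : X}
    (hy : y ∈ (μ : Measure X).support) : diracPM y ∈ {μ}ᵘᵘ := by
  intro ρ hρ
  rw [LPdist_eq_one_comm, LPdist_diracPM_eq_one_iff]
  exact fun b hb hby => (LPdist_eq_one_iff.1 (hρ μ rfl) y hy b hb).not_gt (by rwa [dist_comm])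

theorem diracPM_mem_unitDistSet_unitDistSet_diracPM {x y : X} (hxy : ball y 1 ⊆ ball x 1) :
    diracPM y ∈ {diracPM x}ᵘᵘ := by
  intro ρ hρ
  rw [LPdist_eq_one_comm, LPdist_diracPM_eq_one_iff]
  exact fun b hb hby => LPdist_diracPM_eq_one_iff.1 (hρ _ rfl) b hb (hxy hby)

theorem ball_subset_of_mem_support_of_mem_unitDistSet_unitDistSet_diracPM {x c : X}
    {ν : ProbabilityMeasure X} (hν : ν ∈ {diracPM x}ᵘᵘ) (hc : c ∈ (ν : Measure X).support) :
    ball c 1 ⊆ ball x 1 := by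
  intro b hbc
  by_contra hbx
  have hb : diracPM b ∈ {diracPM x}ᵘ := by
    rintro _ rfl
    rw [LPdist_diracPM_eq_one_iff, support_diracPM]
    rintro _ rfl
    exact hbx
  exact LPdist_diracPM_eq_one_iff.1 (hν _ hb) c hc (mem_ball_comm.1 hbc)

end UnitDistSet

theorem dirac_tfae_general {X : Type*} [MetricSpace X] [SeparableSpace X]
    [MeasurableSpace X] [BorelSpace X] (μ : ProbabilityMeasure X) :
    List.TFAE
      [ unitDistSet (unitDistSet {μ}) = {μ},
        ∃ x : X, μ = diracPM x ∧ ∀ y : X, ball y 1 ⊆ ball x 1 → x = y,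
        ∃ ν : ProbabilityMeasure X, unitDistSet (unitDistSet {μ}) = {ν} ] := by
  tfae_have 1 → 3 := fun h => ⟨μ, h⟩
  tfae_have 3 → 1 := by
    rintro ⟨ν, hν⟩
    have hμ := mem_unitDistSet_unitDistSet_self μ
    rw [hν, mem_singleton_iff] at hμ
    rw [hν, hμ]
  tfae_have 1 → 2 := by
    intro h
    obtain ⟨x, hx⟩ := Measure.nonempty_support (IsProbabilityMeasure.ne_zero (μ : Measure X))
    have hμx : μ = diracPM x :=
      (h ▸ diracPM_mem_unitDistSet_unitDistSet_of_mem_support hx : diracPM x ∈ ({μ} : Set _)).symm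
    refine ⟨x, hμx, fun y hyx => diracPM_injective ?_⟩
    have hy := diracPM_mem_unitDistSet_unitDistSet_diracPM hyx
    rw [← hμx, h, mem_singleton_iff] at hy
    rw [← hμx, hy]
  tfae_have 2 → 1 := by
    rintro ⟨x, rfl, hmax⟩
    refine Subset.antisymm (fun ν hν => ?_)
      (singleton_subset_iff.2 (mem_unitDistSet_unitDistSet_self _))
    exact eq_diracPM_of_support_subset fun c hc =>
      (hmax c (ball_subset_of_mem_support_of_mem_unitDistSet_unitDistSet_diracPM hν hc)).symm
  tfae_finish

/-- Proposition 2.2: metric characterisation of (certain) Dirac measures. -/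
theorem dirac_tfae {X : Type*} [MetricSpace X] [CompleteSpace X] [SeparableSpace X]
    [MeasurableSpace X] [BorelSpace X] (μ : ProbabilityMeasure X) :
    List.TFAE
      [ unitDistSet (unitDistSet {μ}) = {μ},
        ∃ x : X, μ = diracPM x ∧ ∀ y : X, ball y 1 ⊆ ball x 1 → x = y,
        ∃ ν : ProbabilityMeasure X, unitDistSet (unitDistSet {μ}) = {ν} ] :=
  dirac_tfae_general μ
end

section
/- Let (X,‖·‖) be a separable real Banach space and let ψ: X → X be a bijective map such that for every α ∈ (0,1) and all x₁, x₂ ∈ X one has ‖ψ(x₁) − ψ(x₂)‖ = α if and only if ‖x₁ − x₂‖ = α. Then ψ is a surjective affine isometry of X. -/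
open MeasureTheory Metric Set TopologicalSpace

private lemma chain_le {X : Type*} [NormedAddCommGroup X] [NormedSpace ℝ X]
    (ψ : X → X)
    (hsmall : ∀ x y : X, ‖x - y‖ < 1 → ‖ψ x - ψ y‖ ≤ ‖x - y‖) :
    ∀ x y : X, ‖ψ x - ψ y‖ ≤ ‖x - y‖ := by
  intro x y
  set d := ‖x - y‖ with hd
  have hd0 : 0 ≤ d := norm_nonneg _
  set n : ℕ := ⌊d⌋₊ + 1 with hn
  have hdn : d < (n : ℝ) := by exact_mod_cast Nat.lt_floor_add_one d
  have hn0 : (0:ℝ) < (n : ℝ) := lt_of_le_of_lt hd0 hdn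
  set p : ℕ → X := fun i => x + ((i : ℝ)/(n:ℝ)) • (y - x) with hp
  have key : ∀ i : ℕ, ‖p i - p (i+1)‖ = d / n := by
    intro i
    have h1 : p i - p (i+1) = (-(1/(n:ℝ))) • (y - x) := by
      simp only [hp]
      push_cast
      module
    rw [h1, norm_smul]
    rw [norm_sub_rev y x, ← hd]
    rw [Real.norm_eq_abs, abs_neg, abs_of_nonneg (by positivity : (0:ℝ) ≤ 1/(n:ℝ))]
    ring
  have hstep : ∀ i : ℕ, ‖ψ (p i) - ψ (p (i+1))‖ ≤ d / n := by
    intro i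
    have := hsmall (p i) (p (i+1)) (by rw [key i]; exact (div_lt_one hn0).mpr hdn)
    rwa [key i] at this
  have main : ∀ i : ℕ, ‖ψ (p 0) - ψ (p i)‖ ≤ (i : ℝ) * (d / n) := by
    intro i
    induction i with
    | zero => simp
    | succ k ih =>
      calc ‖ψ (p 0) - ψ (p (k+1))‖
          ≤ ‖ψ (p 0) - ψ (p k)‖ + ‖ψ (p k) - ψ (p (k+1))‖ := by
            simpa [dist_eq_norm] using dist_triangle (ψ (p 0)) (ψ (p k)) (ψ (p (k+1)))
        _ ≤ (k : ℝ) * (d / n) + d / n := add_le_add ih (hstep k)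
        _ = ((k+1 : ℕ) : ℝ) * (d / n) := by push_cast; ring
  have h0 : p 0 = x := by simp [hp]
  have hnn : p n = y := by
    simp only [hp]
    rw [div_self (ne_of_gt hn0), one_smul]
    abel
  have := main n
  rw [h0, hnn] at this
  calc ‖ψ x - ψ y‖ ≤ (n : ℝ) * (d / n) := this
    _ = d := by field_simp

/-- A bijection of a separable real Banach space preserving, in both directions, all
distances `α ∈ (0,1)` is a surjective affine isometry. -/
theorem preserves_small_distances {X : Type*} [NormedAddCommGroup X] [NormedSpace ℝ X]
    [CompleteSpace X] [SeparableSpace X]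
    (ψ : X → X) (hbij : Function.Bijective ψ)
    (h : ∀ α : ℝ, α ∈ Set.Ioo (0 : ℝ) 1 → ∀ x₁ x₂ : X,
      ‖ψ x₁ - ψ x₂‖ = α ↔ ‖x₁ - x₂‖ = α) :
    ∃ Ψ : X ≃ᵃⁱ[ℝ] X, (Ψ : X → X) = ψ := by
  set e : X ≃ X := Equiv.ofBijective ψ hbij with he
  have hcoe : ∀ x, e x = ψ x := fun x => rfl
  have hsmall : ∀ x y : X, ‖x - y‖ < 1 → ‖ψ x - ψ y‖ ≤ ‖x - y‖ := by
    intro x y hlt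
    rcases eq_or_ne x y with rfl | hne
    · simp
    · have hpos : 0 < ‖x - y‖ := norm_pos_iff.mpr (sub_ne_zero.mpr hne)
      exact le_of_eq ((h _ ⟨hpos, hlt⟩ x y).mpr rfl)
  have hsmall' : ∀ u v : X, ‖u - v‖ < 1 → ‖e.symm u - e.symm v‖ ≤ ‖u - v‖ := by
    intro u v hlt
    rcases eq_or_ne u v with rfl | hne
    · simp
    · have hpos : 0 < ‖u - v‖ := norm_pos_iff.mpr (sub_ne_zero.mpr hne)
      refine le_of_eq ((h _ ⟨hpos, hlt⟩ (e.symm u) (e.symm v)).mp ?_)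
      rw [← hcoe, ← hcoe, e.apply_symm_apply, e.apply_symm_apply]
  have hiso : ∀ x y : X, ‖ψ x - ψ y‖ = ‖x - y‖ := by
    intro x y
    refine le_antisymm (chain_le ψ hsmall x y) ?_
    have := chain_le (fun u => e.symm u) hsmall' (ψ x) (ψ y)
    rwa [← hcoe, ← hcoe, e.symm_apply_apply, e.symm_apply_apply] at this
  have hIso : Isometry ψ := Isometry.of_dist_eq (fun x y => by
    simp [dist_eq_norm, hiso])
  set F : X ≃ᵢ X := ⟨e, hIso⟩ with hF
  exact ⟨F.toRealAffineIsometryEquiv, by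
    rw [IsometryEquiv.coeFn_toRealAffineIsometryEquiv]; rfl⟩
end

section
/- Let (X,‖·‖) be a separable real Banach space and let φ: P_X → P_X be a surjective π-isometry with φ(δ_x) = δ_x for all x ∈ X. Let μ ∈ F_X \ Δ_X, let K be the convex hull of S_μ and let x̂ be a vertex of K. Then S_{φ(μ)} ⊆ K, and x̂ is an isolated atom of φ(μ) with (φ(μ))({x̂}) = μ({x̂}) (i.e., there is r > 0 with (φ(μ))(closure(B_{r'}(x̂))) = (φ(μ))({x̂}) = μ({x̂}) for some r' > 0). -/
/-!
Because `φ` fixes Dirac measures, `φ μ` and `μ` have the same witness function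
`x ↦ π(δₓ, ·)`, and `π(δₓ, ρ)` is the least `ε > 0` with `ρ(B(x, ε)) + ε ≥ 1`. The two measures
are compared through witnesses `x = p + t z`, where `z` is a unit direction on which a norm-one
functional `g` is almost maximal. If `μ` has mass at most `m < 1` on the half-space
`{g > g p - δ}`, balls around `x` see at most `m` of `μ` up to radius `δ + t(1 - o(1))`, so `φ μ`
cannot carry more than `m` on a small ball around `p`. Separating a point outside `K` from `K`
this shows that `φ μ` lives on `K`; exposing the vertex `x̂` by `g` it bounds the mass of `φ μ`
near `x̂` by `μ({x̂})`. Conversely the witness just short of distance `1 - μ({x̂})` beyond `x̂`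
sees `μ` within that distance, and its ball meets `K` only in a thin cap around `x̂`, which
forces mass `μ({x̂})` of `φ μ` into every ball around `x̂`.
-/

open MeasureTheory Metric Set TopologicalSpace

open scoped ENNReal

section Witness

variable {X : Type*} [MetricSpace X] [MeasurableSpace X]

lemma one_mem_witness_set (ρ : ProbabilityMeasure X) (x : X) :
    (1 : ℝ) ∈ {ε : ℝ | 0 < ε ∧ 1 ≤ (ρ : Measure X) (ball x ε) + ENNReal.ofReal ε} :=
  ⟨one_pos, by simp⟩

variable [MeasurableSingletonClass X]

lemma witness_eq_sInf (ρ : ProbabilityMeasure X) (x : X) :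
    witness ρ x = sInf {ε : ℝ | 0 < ε ∧ 1 ≤ (ρ : Measure X) (ball x ε) + ENNReal.ofReal ε} := by
  refine congrArg sInf (Set.ext fun ε => and_congr_right fun _ => ⟨fun h => ?_, fun h A hA => ?_⟩)
  · simpa [diracPM, thickening_singleton] using h {x} (measurableSet_singleton x)
  · by_cases hx : x ∈ A
    · calc (diracPM x : Measure X) A ≤ 1 := prob_le_one
        _ ≤ _ := h
        _ ≤ _ := by
          gcongr
          rw [← thickening_singleton]
          exact thickening_subset_of_subset ε (singleton_subset_iff.2 hx)
    · simp [diracPM, Measure.dirac_apply' x hA, hx]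

lemma witness_le_of_one_le (ρ : ProbabilityMeasure X) {x : X} {ε : ℝ} (hε : 0 < ε)
    (h : 1 ≤ (ρ : Measure X) (ball x ε) + ENNReal.ofReal ε) : witness ρ x ≤ ε := by
  rw [witness_eq_sInf]
  exact csInf_le ⟨0, fun _ hδ => hδ.1.le⟩ ⟨hε, h⟩

lemma one_le_of_witness_lt (ρ : ProbabilityMeasure X) {x : X} {ε : ℝ} (h : witness ρ x < ε) :
    1 ≤ (ρ : Measure X) (ball x ε) + ENNReal.ofReal ε := by
  rw [witness_eq_sInf] at h
  obtain ⟨δ, ⟨-, hδ⟩, hδε⟩ := exists_lt_of_csInf_lt ⟨1, one_mem_witness_set ρ x⟩ h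
  exact hδ.trans (by gcongr)

lemma min_le_witness (ρ : ProbabilityMeasure X) {x : X} {m R : ℝ} (hm : 0 ≤ m)
    (h : ∀ ε, 0 < ε → ε < R → (ρ : Measure X) (ball x ε) ≤ ENNReal.ofReal m) :
    min (1 - m) R ≤ witness ρ x := by
  rw [witness_eq_sInf]
  refine le_csInf ⟨1, one_mem_witness_set ρ x⟩ fun ε ⟨hε, hball⟩ => ?_
  by_contra! hlt
  have : (1 : ℝ≥0∞) ≤ ENNReal.ofReal (m + ε) := by
    rw [ENNReal.ofReal_add hm hε.le]
    exact hball.trans (by gcongr; exact h ε hε (hlt.trans_le (min_le_right _ _)))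
  linarith [ENNReal.one_le_ofReal.1 this, hlt.trans_le (min_le_left _ _)]

end Witness

section Geometry

variable {E : Type*} [NormedAddCommGroup E] [NormedSpace ℝ E]

lemma apply_sub_apply_le_dist {g : E →L[ℝ] ℝ} (hg : ‖g‖ ≤ 1) (x y : E) :
    g x - g y ≤ dist x y :=
  calc g x - g y = g (x - y) := (map_sub g x y).symm
    _ ≤ ‖g‖ * ‖x - y‖ := (le_abs_self _).trans (g.le_opNorm _)
    _ ≤ dist x y := by rw [dist_eq_norm]; exact mul_le_of_le_one_left (norm_nonneg _) hg

lemma exists_dist_le_and_add_mul_le_apply {g : E →L[ℝ] ℝ} (hg : ‖g‖ = 1) (p : E) {t γ : ℝ}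
    (ht : 0 ≤ t) (hγ : 0 < γ) : ∃ x, dist x p ≤ t ∧ g p + t * (1 - γ) ≤ g x := by
  obtain ⟨z, hz, hgz⟩ : ∃ z : E, ‖z‖ ≤ 1 ∧ 1 - γ < g z := by
    obtain ⟨z, hz, hgz⟩ := g.exists_lt_apply_of_lt_opNorm (r := 1 - γ) (by linarith)
    rcases le_or_gt 0 (g z) with h | h
    · exact ⟨z, hz.le, by rwa [Real.norm_eq_abs, abs_of_nonneg h] at hgz⟩
    · exact ⟨-z, by simpa using hz.le, by rw [Real.norm_eq_abs, abs_of_neg h] at hgz; simpa⟩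
  refine ⟨p + t • z, ?_, ?_⟩
  · rw [dist_eq_norm, add_sub_cancel_left, norm_smul, Real.norm_of_nonneg ht]
    exact mul_le_of_le_one_right ht hz
  · rw [map_add, map_smul, smul_eq_mul]
    nlinarith

lemma exists_norm_eq_one_separating_of_notMem {C : Set E} (hC : Convex ℝ C) (hCc : IsClosed C)
    (hne : C.Nonempty) {p : E} (hp : p ∉ C) :
    ∃ g : E →L[ℝ] ℝ, ‖g‖ = 1 ∧ ∃ δ > 0, ∀ k ∈ C, g k ≤ g p - δ := by
  obtain ⟨f, u, hfC, hfp⟩ := geometric_hahn_banach_closed_point hC hCc hp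
  obtain ⟨k₀, hk₀⟩ := hne
  have hf : 0 < ‖f‖ := norm_pos_iff.2 fun h => by
    have := hfC k₀ hk₀
    simp only [h, zero_apply] at this hfp
    linarith
  refine ⟨‖f‖⁻¹ • f, by rw [norm_smul, norm_inv, norm_norm, inv_mul_cancel₀ hf.ne'],
    ‖f‖⁻¹ * (f p - u), mul_pos (inv_pos.2 hf) (by linarith), fun k hk => ?_⟩
  simp only [smul_apply, smul_eq_mul]
  nlinarith [hfC k hk, inv_pos.2 hf]

lemma exists_dist_lt_of_mem_convexJoin {C : Set E} (hC : Bornology.IsBounded C)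
    {g : E →L[ℝ] ℝ} {p : E} {β ρ : ℝ} (hβ : 0 < β) (hsep : ∀ k ∈ C, g k ≤ g p - β)
    (hρ : 0 < ρ) : ∃ c > 0, ∀ y ∈ convexJoin ℝ {p} C, g p - c < g y → dist y p < ρ := by
  obtain ⟨R, hR⟩ := (isBounded_iff_subset_closedBall p).1 hC
  set M := max R 1
  have hM : 0 < M := lt_max_of_lt_right one_pos
  refine ⟨ρ * β / M, by positivity, fun y hy hgy => ?_⟩
  obtain ⟨a, ha, k, hk, hyk⟩ := mem_convexJoin.1 hy
  rw [mem_singleton_iff.1 ha, segment_eq_image'] at hyk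
  obtain ⟨θ, ⟨hθ0, -⟩, rfl⟩ := hyk
  have hkp : ‖k - p‖ ≤ M := (mem_closedBall_iff_norm.1 (hR hk)).trans (le_max_left _ _)
  have hθβ : θ * β < ρ * β / M := by
    have := hsep k hk
    rw [map_add, map_smul, map_sub, smul_eq_mul] at hgy
    nlinarith
  have hθ : θ * M < ρ := by
    rw [lt_div_iff₀ hM] at hθβ
    nlinarith
  rw [dist_eq_norm, add_sub_cancel_left, norm_smul, Real.norm_of_nonneg hθ0]
  nlinarith

lemma exists_norm_eq_one_exposing_of_mem_extremePoints {s : Set E} (hs : s.Finite) {xv : E}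
    (hxv : xv ∈ extremePoints ℝ (convexHull ℝ s)) (hrest : (s \ {xv}).Nonempty) :
    ∃ g : E →L[ℝ] ℝ, ‖g‖ = 1 ∧ ∃ β > 0, (∀ q ∈ s \ {xv}, g q ≤ g xv - β) ∧
      ∀ ρ > 0, ∃ c > 0, ∀ y ∈ convexHull ℝ s, g xv - c < g y → dist y xv < ρ := by
  have hxC : xv ∉ convexHull ℝ (s \ {xv}) := fun h =>
    ((convex_convexHull ℝ _).mem_extremePoints_iff_mem_sdiff_convexHull_sdiff.1 hxv).2
      (convexHull_mono (sdiff_subset_sdiff_left (subset_convexHull ℝ _)) h)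
  have hC := (hs.sdiff (t := {xv})).isCompact_convexHull ℝ
  obtain ⟨g, hg, β, hβ, hsep⟩ :=
    exists_norm_eq_one_separating_of_notMem (convex_convexHull ℝ _) hC.isClosed hrest.convexHull hxC
  have hxs : xv ∈ s := extremePoints_convexHull_subset hxv
  refine ⟨g, hg, β, hβ, fun q hq => hsep q (subset_convexHull ℝ _ hq), fun ρ hρ => ?_⟩
  rw [← insert_eq_of_mem hxs, ← insert_sdiff_singleton, convexHull_insert hrest]
  exact exists_dist_lt_of_mem_convexJoin hC.isBounded hβ hsep hρ

end Geometry

lemma le_measure_singleton_of_forall_le_measure_closedBall {X : Type*} [MetricSpace X]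
    [MeasurableSpace X] [OpensMeasurableSpace X] {μ : Measure X} [IsFiniteMeasure μ] {x : X}
    {a : ℝ≥0∞} (h : ∀ ρ > 0, a ≤ μ (closedBall x ρ)) : a ≤ μ {x} := by
  have hlim := tendsto_measure_cthickening_of_isClosed (μ := μ) ⟨1, one_pos, measure_ne_top _ _⟩
    (isClosed_singleton (x := x))
  refine ge_of_tendsto (hlim.mono_left (nhdsWithin_le_nhds (s := Ioi 0))) ?_
  filter_upwards [self_mem_nhdsWithin] with ρ hρ
  rw [cthickening_singleton _ (le_of_lt hρ)]
  exact h ρ hρ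

section Transfer

variable {X : Type*} [NormedAddCommGroup X] [NormedSpace ℝ X] [MeasurableSpace X]
  [OpensMeasurableSpace X] {μ ν : ProbabilityMeasure X}

lemma exists_measure_closedBall_le_of_witness_eq (hwit : ∀ x, witness ν x = witness μ x)
    {g : X →L[ℝ] ℝ} (hg : ‖g‖ = 1) {p : X} {δ m : ℝ} (hδ : 0 < δ) (hm0 : 0 ≤ m) (hm1 : m < 1)
    (hμ : (μ : Measure X) {q | g p - δ < g q} ≤ ENNReal.ofReal m) :
    ∃ r > 0, (ν : Measure X) (closedBall p r) ≤ ENNReal.ofReal m := by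
  set r := min δ (1 - m) / 8
  have hrδ : r ≤ δ / 8 := by have := min_le_left δ (1 - m); simp only [r]; linarith
  have hrm : r ≤ (1 - m) / 8 := by have := min_le_right δ (1 - m); simp only [r]; linarith
  have hr : 0 < r := by have := lt_min hδ (sub_pos.2 hm1); simp only [r]; linarith
  refine ⟨r, hr, not_lt.1 fun hlt => ?_⟩
  set η := ((ν : Measure X) (closedBall p r)).toReal - m
  have hνη : (ν : Measure X) (closedBall p r) = ENNReal.ofReal (m + η) := by
    simp only [η, add_sub_cancel, ENNReal.ofReal_toReal (measure_ne_top _ _)]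
  have hη : 0 < η := by
    rw [hνη] at hlt
    linarith [(ENNReal.ofReal_lt_ofReal_iff_of_nonneg hm0).1 hlt]
  set t := max (1 - m - η - 2 * r) 0
  have ht : t < 1 - m - 2 * r := max_lt (by linarith) (by linarith)
  obtain ⟨x, hxp, hgx⟩ :=
    exists_dist_le_and_add_mul_le_apply hg p (le_max_right _ _) (show 0 < δ / 4 by positivity)
  have hν : witness ν x ≤ t + 2 * r := by
    refine witness_le_of_one_le ν (by positivity) ?_
    have hball : closedBall p r ⊆ ball x (t + 2 * r) := fun q hq => by
      rw [mem_closedBall] at hq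
      rw [mem_ball]
      linarith [dist_triangle q p x, dist_comm x p]
    calc (1 : ℝ≥0∞) ≤ ENNReal.ofReal (m + η) + ENNReal.ofReal (t + 2 * r) := by
          rw [← ENNReal.ofReal_add (by linarith) (by positivity)]
          exact ENNReal.one_le_ofReal.2 (by linarith [le_max_left (1 - m - η - 2 * r) 0])
      _ ≤ _ := by rw [← hνη]; gcongr
  have hμx : min (1 - m) (δ + t * (1 - δ / 4)) ≤ witness μ x := by
    refine min_le_witness μ hm0 fun ε _ hε => (measure_mono fun q hq => ?_).trans hμ
    rw [mem_ball, dist_comm] at hq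
    have := apply_sub_apply_le_dist hg.le x q
    show g p - δ < g q
    linarith
  have htδ : t * δ < δ := by nlinarith
  rcases min_le_iff.1 hμx with h | h <;> linarith [hwit x]

lemma measure_closedBall_eq_zero_of_witness_eq (hwit : ∀ x, witness ν x = witness μ x)
    {K : Set X} (hK : Convex ℝ K) (hKc : IsClosed K) (hμK : (μ : Measure X) Kᶜ = 0)
    {p : X} (hp : p ∉ K) : ∃ r > 0, (ν : Measure X) (closedBall p r) = 0 := by
  have hne : K.Nonempty := nonempty_iff_ne_empty.2 fun h => by simp [h] at hμK
  obtain ⟨g, hg, δ, hδ, hsep⟩ := exists_norm_eq_one_separating_of_notMem hK hKc hne hp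
  have hμ : (μ : Measure X) {q | g p - δ < g q} ≤ ENNReal.ofReal 0 := by
    rw [ENNReal.ofReal_zero, ← hμK]
    refine measure_mono (t := Kᶜ) fun q hq hqK => ?_
    exact (hsep q hqK).not_gt hq
  obtain ⟨r, hr, hνr⟩ := exists_measure_closedBall_le_of_witness_eq hwit hg hδ le_rfl one_pos hμ
  exact ⟨r, hr, by simpa using hνr⟩

lemma measure_compl_eq_zero_of_witness_eq [SecondCountableTopology X]
    (hwit : ∀ x, witness ν x = witness μ x) {K : Set X} (hK : Convex ℝ K) (hKc : IsClosed K)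
    (hμK : (μ : Measure X) Kᶜ = 0) : (ν : Measure X) Kᶜ = 0 :=
  measure_null_of_locally_null _ fun p hp => by
    obtain ⟨r, hr, hνr⟩ := measure_closedBall_eq_zero_of_witness_eq hwit hK hKc hμK hp
    exact ⟨closedBall p r, nhdsWithin_le_nhds (closedBall_mem_nhds p hr), hνr⟩

lemma mSupport_subset_of_witness_eq (hwit : ∀ x, witness ν x = witness μ x) {K : Set X}
    (hK : Convex ℝ K) (hKc : IsClosed K) (hμK : (μ : Measure X) Kᶜ = 0) : mSupport ν ⊆ K :=
  fun p hpν => by_contra fun hp => by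
    obtain ⟨r, hr, hνr⟩ := measure_closedBall_eq_zero_of_witness_eq hwit hK hKc hμK hp
    exact (hpν r hr).ne' (measure_mono_null ball_subset_closedBall hνr)

lemma ofReal_le_measure_ball_of_witness_eq (hwit : ∀ x, witness ν x = witness μ x)
    {K : Set X} (hνK : (ν : Measure X) Kᶜ = 0) {g : X →L[ℝ] ℝ} (hg : ‖g‖ = 1) {xv : X}
    {m c ρ : ℝ} (hm0 : 0 ≤ m) (hm1 : m < 1) (hμ : ENNReal.ofReal m ≤ (μ : Measure X) {xv})
    (hc : 0 < c) (hcap : ∀ y ∈ K, g xv - c < g y → dist y xv < ρ) :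
    ENNReal.ofReal m ≤ (ν : Measure X) (ball xv ρ) := by
  set a := 1 - m
  have hma : ENNReal.ofReal m + ENNReal.ofReal a = 1 := by
    rw [← ENNReal.ofReal_add hm0 (by linarith)]; simp [a]
  have key : ∀ e : ℝ, 0 < e → e < a → 3 * e ≤ c →
      ENNReal.ofReal m ≤ (ν : Measure X) (ball xv ρ) + ENNReal.ofReal e := by
    intro e he hea hec
    obtain ⟨x, hxv, hgx⟩ :=
      exists_dist_le_and_add_mul_le_apply hg xv (t := a - e) (by linarith) he
    have hμx : witness μ x ≤ a := by
      refine witness_le_of_one_le μ (by linarith) (hma.symm.le.trans (add_le_add ?_ le_rfl))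
      exact hμ.trans (measure_mono (singleton_subset_iff.2 (by rw [mem_ball, dist_comm]; linarith)))
    have hball : ball x (a + e) ∩ K ⊆ ball xv ρ := fun q ⟨hq, hqK⟩ => by
      refine mem_ball.2 (hcap q hqK ?_)
      rw [mem_ball, dist_comm] at hq
      have := apply_sub_apply_le_dist hg.le x q
      -- `g q > g x - (a + e) ≥ g xv + (a - e) (1 - e) - (a + e) ≥ g xv - 3 e`, as `a ≤ 1`
      nlinarith
    have hν := one_le_of_witness_lt ν (x := x) (ε := a + e) (by rw [hwit]; linarith)
    rw [← measure_inter_conull hνK] at hν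
    refine (ENNReal.add_le_add_iff_right (ENNReal.ofReal_ne_top (r := a))).1 ?_
    calc ENNReal.ofReal m + ENNReal.ofReal a
        ≤ (ν : Measure X) (ball x (a + e) ∩ K) + ENNReal.ofReal (a + e) := hma.le.trans hν
      _ ≤ (ν : Measure X) (ball xv ρ) + (ENNReal.ofReal e + ENNReal.ofReal a) := by
        gcongr
        rw [add_comm]
        exact ENNReal.ofReal_add_le
      _ = _ := (add_assoc _ _ _).symm
  refine ENNReal.le_of_forall_pos_le_add fun ε hε _ => ?_
  set e := min (ε : ℝ) (min (a / 2) (c / 3))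
  have hea : e < a := (min_le_right _ _).trans_lt ((min_le_left _ _).trans_lt (by linarith))
  have hec : 3 * e ≤ c := by
    linarith [(min_le_right (ε : ℝ) _).trans (min_le_right (a / 2) (c / 3))]
  have he : 0 < e := lt_min hε (lt_min (by linarith) (by linarith))
  calc ENNReal.ofReal m ≤ (ν : Measure X) (ball xv ρ) + ENNReal.ofReal e := key e he hea hec
    _ ≤ _ := by
      gcongr
      rw [← ENNReal.ofReal_coe_nnreal]
      exact ENNReal.ofReal_le_ofReal (min_le_left _ _)

lemma measure_singleton_eq_of_witness_eq (hwit : ∀ x, witness ν x = witness μ x)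
    {K : Set X} (hνK : (ν : Measure X) Kᶜ = 0) {g : X →L[ℝ] ℝ} (hg : ‖g‖ = 1) {xv : X} {β : ℝ}
    (hβ : 0 < β) (hcap : ∀ ρ > 0, ∃ c > 0, ∀ y ∈ K, g xv - c < g y → dist y xv < ρ)
    (hμ : (μ : Measure X) {q | g xv - β < g q} ≤ (μ : Measure X) {xv})
    (hlt : (μ : Measure X) {xv} < 1) :
    (ν : Measure X) {xv} = (μ : Measure X) {xv} ∧
      ∃ r > 0, (ν : Measure X) (closedBall xv r) = (ν : Measure X) {xv} := by
  set m := ((μ : Measure X) {xv}).toReal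
  have hm : (μ : Measure X) {xv} = ENNReal.ofReal m :=
    (ENNReal.ofReal_toReal (measure_ne_top _ _)).symm
  have hm1 : m < 1 := by rw [hm] at hlt; exact (ENNReal.ofReal_lt_one).1 hlt
  obtain ⟨r, hr, hupper⟩ := exists_measure_closedBall_le_of_witness_eq hwit hg hβ
    ENNReal.toReal_nonneg hm1 (hm ▸ hμ)
  have hlower : ∀ ρ > 0, ENNReal.ofReal m ≤ (ν : Measure X) (closedBall xv ρ) := fun ρ hρ => by
    obtain ⟨c, hc, hcapρ⟩ := hcap ρ hρ
    exact (ofReal_le_measure_ball_of_witness_eq hwit hνK hg ENNReal.toReal_nonneg hm1 hm.ge hc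
      hcapρ).trans (measure_mono ball_subset_closedBall)
  have hsing : (ν : Measure X) {xv} = ENNReal.ofReal m :=
    le_antisymm ((measure_mono (singleton_subset_iff.2 (mem_closedBall_self hr.le))).trans hupper)
      (le_measure_singleton_of_forall_le_measure_closedBall hlower)
  refine ⟨hsing.trans hm.symm, r, hr, le_antisymm (hupper.trans hsing.ge) (measure_mono ?_)⟩
  exact singleton_subset_iff.2 (mem_closedBall_self hr.le)

end Transfer

section FinitelySupported

variable {X : Type*} [MeasurableSpace X] {μ : ProbabilityMeasure X}

lemma mSupport_eq_of_measure_compl_eq_zero [MetricSpace X] {s : Set X} (hs : IsClosed s)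
    (hμs : (μ : Measure X) sᶜ = 0) (hpos : ∀ x ∈ s, 0 < (μ : Measure X) {x}) :
    mSupport μ = s := by
  refine Subset.antisymm (fun x hx => by_contra fun hxs => ?_) fun x hx r hr =>
    (hpos x hx).trans_le (measure_mono (singleton_subset_iff.2 (mem_ball_self hr)))
  obtain ⟨r, hr, hball⟩ := Metric.isOpen_iff.1 hs.isOpen_compl x hxs
  exact (hx r hr).ne' (measure_mono_null hball hμs)

variable [MeasurableSingletonClass X]

lemma IsFinitelySupported.exists_finset (hμ : IsFinitelySupported μ) :
    ∃ s : Finset X, (μ : Measure X) (↑s)ᶜ = 0 ∧ ∀ x ∈ s, 0 < (μ : Measure X) {x} := by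
  obtain ⟨s, w, hw, -, hrep⟩ := hμ
  refine ⟨s, ?_, fun x hx => ?_⟩
  · rw [hrep, Measure.finsetSum_apply]
    refine Finset.sum_eq_zero fun p hp => ?_
    simp [Measure.dirac_apply' p s.finite_toSet.measurableSet.compl, hp]
  · rw [hrep, Measure.finsetSum_apply]
    refine lt_of_lt_of_le ?_ (Finset.single_le_sum (fun p _ => zero_le) hx)
    simpa using hw x hx

lemma measure_singleton_lt_one (hμ : μ ∉ range fun x : X => diracPM x) (x : X) :
    (μ : Measure X) {x} < 1 := by
  refine prob_le_one.lt_of_ne fun h => hμ ⟨x, ProbabilityMeasure.toMeasure_injective ?_⟩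
  have hae : ∀ᵐ y ∂(μ : Measure X), y ∈ ({x} : Set X) :=
    (prob_compl_eq_zero_iff (measurableSet_singleton x)).2 h
  rw [← Measure.restrict_eq_self_of_ae_mem hae, Measure.restrict_singleton, h, one_smul]
  rfl

end FinitelySupported

theorem vertex_isolated_atom_general {X : Type*} [NormedAddCommGroup X] [NormedSpace ℝ X]
    [SeparableSpace X] [MeasurableSpace X] [BorelSpace X]
    (φ : ProbabilityMeasure X → ProbabilityMeasure X)
    (hiso : ∀ μ ν : ProbabilityMeasure X, LPdist (φ μ) (φ ν) = LPdist μ ν)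
    (hfix : ∀ x : X, φ (diracPM x) = diracPM x)
    (μ : ProbabilityMeasure X) (hμ : IsFinitelySupported μ)
    (hμnd : μ ∉ Set.range fun x : X => diracPM x)
    (xv : X) (hxv : xv ∈ Set.extremePoints ℝ (convexHull ℝ (mSupport μ))) :
    mSupport (φ μ) ⊆ convexHull ℝ (mSupport μ) ∧
    0 < (φ μ : Measure X) {xv} ∧
    (∃ r : ℝ, 0 < r ∧ (φ μ : Measure X) (closure (ball xv r)) = (φ μ : Measure X) {xv}) ∧
    (φ μ : Measure X) {xv} = (μ : Measure X) {xv} := by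
  have : SecondCountableTopology X := UniformSpace.secondCountable_of_separable X
  obtain ⟨s, hs, hpos⟩ := hμ.exists_finset
  rw [mSupport_eq_of_measure_compl_eq_zero s.finite_toSet.isClosed hs hpos] at hxv ⊢
  have hwit : ∀ x, witness (φ μ) x = witness μ x := fun x => by
    simpa only [witness, hfix] using hiso (diracPM x) μ
  have hK := convex_convexHull ℝ (s : Set X)
  have hKc : IsClosed (convexHull ℝ (s : Set X)) :=
    (s.finite_toSet.isCompact_convexHull ℝ).isClosed
  have hμK : (μ : Measure X) (convexHull ℝ (s : Set X))ᶜ = 0 :=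
    measure_mono_null (compl_subset_compl.2 (subset_convexHull ℝ _)) hs
  have hxs : xv ∈ s := extremePoints_convexHull_subset hxv
  have hlt := measure_singleton_lt_one hμnd xv
  have hrest : ((s : Set X) \ {xv}).Nonempty := by
    refine nonempty_iff_ne_empty.2 fun h => hlt.not_ge ?_
    refine ((prob_compl_eq_zero_iff (measurableSet_singleton xv)).1 ?_).ge
    exact measure_mono_null (compl_subset_compl.2 (sdiff_eq_empty.1 h)) hs
  obtain ⟨g, hg, β, hβ, hsep, hcap⟩ :=
    exists_norm_eq_one_exposing_of_mem_extremePoints s.finite_toSet hxv hrest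
  have hμcap : (μ : Measure X) {q | g xv - β < g q} ≤ (μ : Measure X) {xv} := by
    rw [← measure_inter_conull hs]
    exact measure_mono fun q ⟨hq, hqs⟩ =>
      by_contra fun hne => (hsep q ⟨hqs, hne⟩).not_gt hq
  obtain ⟨hsing, r, hr, hball⟩ := measure_singleton_eq_of_witness_eq hwit
    (measure_compl_eq_zero_of_witness_eq hwit hK hKc hμK) hg hβ hcap hμcap hlt
  refine ⟨mSupport_subset_of_witness_eq hwit hK hKc hμK, hsing ▸ hpos xv hxs, ⟨r, hr, ?_⟩, hsing⟩
  rwa [closure_ball xv hr.ne']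

/-- The last statement of Proposition 3.2: for a surjective Lévy–Prokhorov isometry fixing
all Dirac measures, the image of a finitely supported non-Dirac measure is supported in the
convex hull `K` of the original support, and every vertex of `K` is an isolated atom of the
image, with the same weight. -/
theorem vertex_isolated_atom {X : Type*} [NormedAddCommGroup X] [NormedSpace ℝ X]
    [CompleteSpace X] [SeparableSpace X] [MeasurableSpace X] [BorelSpace X]
    (φ : ProbabilityMeasure X → ProbabilityMeasure X)
    (hsurj : Function.Surjective φ)
    (hiso : ∀ μ ν : ProbabilityMeasure X, LPdist (φ μ) (φ ν) = LPdist μ ν)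
    (hfix : ∀ x : X, φ (diracPM x) = diracPM x)
    (μ : ProbabilityMeasure X) (hμ : IsFinitelySupported μ)
    (hμnd : μ ∉ Set.range fun x : X => diracPM x)
    (xv : X) (hxv : xv ∈ Set.extremePoints ℝ (convexHull ℝ (mSupport μ))) :
    mSupport (φ μ) ⊆ convexHull ℝ (mSupport μ) ∧
    0 < (φ μ : Measure X) {xv} ∧
    (∃ r : ℝ, 0 < r ∧ (φ μ : Measure X) (closure (ball xv r)) = (φ μ : Measure X) {xv}) ∧
    (φ μ : Measure X) {xv} = (μ : Measure X) {xv} :=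
  vertex_isolated_atom_general φ hiso hfix μ hμ hμnd xv hxv
end

section
/- Let (X,‖·‖) be a separable real Banach space, s > 0, μ ∈ F_X a finitely supported measure and ν ∈ P_X with ν ≠ μ. Then π_s(μ,ν) = min{ε > 0 | s·μ(A) ≤ s·ν(closure(A^ε)) + ε for all A ⊆ S_μ}; in particular the infimum defining this set is attained. -/
open MeasureTheory Metric Set TopologicalSpace

/-!
Call `ε > 0` admissible when `s μ(A) ≤ s ν(A^ε) + ε` for all Borel `A`, so that `π_s(μ, ν)` is the
infimum `d` of the admissible radii. Letting `ε ↓ d` in the admissible inequalities, continuity of `ν`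
along the decreasing family `A^ε` with intersection the closed thickening gives
`s μ(A) ≤ s ν(cthickening d A) + d`, and in a normed space `cthickening d A = closure (A^d)` once
`d > 0`. The infimum is positive when `ν ≠ μ`: otherwise the case `d = 0` gives `μ(C) ≤ ν(C)` on closed
sets, which forces `μ = ν`. Conversely, since `μ` lives on `S_μ` and `closure (A^ε) ⊆ A^ε'` for
`ε < ε'`, any `ε` satisfying the inequality on subsets of `S_μ` bounds `π_s(μ, ν)`.
-/

open Filter Topology ENNReal

section Thickening

variable {α : Type*} [PseudoMetricSpace α] [MeasurableSpace α] [OpensMeasurableSpace α]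

theorem le_mul_measure_cthickening_add_of_forall_lt (ν : Measure α) [IsFiniteMeasure ν]
    {a c : ℝ≥0∞} (hc : c ≠ ∞) {d : ℝ} (hd : 0 ≤ d) {A : Set α}
    (h : ∀ ε > d, a ≤ c * ν (thickening ε A) + ENNReal.ofReal ε) :
    a ≤ c * ν (cthickening d A) + ENNReal.ofReal d := by
  have hν : Tendsto (fun ε => ν (thickening ε A)) (𝓝[>] d) (𝓝 (ν (cthickening d A))) := by
    rw [cthickening_eq_iInter_thickening hd]
    exact tendsto_measure_biInter_gt (fun _ _ => isOpen_thickening.nullMeasurableSet)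
      (fun _ _ _ hij => thickening_mono hij A) ⟨d + 1, by linarith, measure_ne_top ν _⟩
  have hε : Tendsto ENNReal.ofReal (𝓝[>] d) (𝓝 (ENNReal.ofReal d)) :=
    (ENNReal.continuous_ofReal.tendsto d).mono_left nhdsWithin_le_nhds
  exact ge_of_tendsto ((ENNReal.Tendsto.const_mul hν (Or.inr hc)).add hε)
    (eventually_nhdsWithin_of_forall h)

theorem ProbabilityMeasure.eq_of_forall_isClosed_le [BorelSpace α] {μ ν : ProbabilityMeasure α}
    (h : ∀ C, IsClosed C → (μ : Measure α) C ≤ (ν : Measure α) C) : μ = ν := by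
  have hopen : ∀ U, IsOpen U → (ν : Measure α) U ≤ (μ : Measure α) U := fun U hU => by
    have := h Uᶜ hU.isClosed_compl
    rwa [prob_compl_eq_one_sub hU.measurableSet, prob_compl_eq_one_sub hU.measurableSet,
      ENNReal.sub_le_sub_iff_left prob_le_one one_ne_top] at this
  have hclosed : ∀ C, IsClosed C → (ν : Measure α) C ≤ (μ : Measure α) C := fun C hC =>
    le_of_tendsto_of_tendsto'
      (tendsto_measure_thickening_of_isClosed ⟨1, one_pos, measure_ne_top _ _⟩ hC)
      (tendsto_measure_thickening_of_isClosed ⟨1, one_pos, measure_ne_top _ _⟩ hC)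
      (fun _ => hopen _ isOpen_thickening)
  refine ProbabilityMeasure.toMeasure_injective <|
    ext_of_generate_finite _ ?_ isPiSystem_isClosed
      (fun C hC => le_antisymm (h C hC) (hclosed C hC)) (by simp)
  rw [BorelSpace.measurable_eq (α := α), borel_eq_generateFrom_isClosed]

end Thickening

section Support

variable {X : Type*} [MetricSpace X] [MeasurableSpace X] {μ : ProbabilityMeasure X}

theorem mem_mSupport_of_measure_singleton_pos [OpensMeasurableSpace X] {x : X}
    (hx : 0 < (μ : Measure X) {x}) : x ∈ mSupport μ := fun _ hr =>
  hx.trans_le (measure_mono (singleton_subset_iff.2 (mem_ball_self hr)))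

theorem mSupport_subset_of_isClosed {C : Set X} (hC : IsClosed C)
    (hμC : (μ : Measure X) Cᶜ = 0) : mSupport μ ⊆ C := fun x hx => by
  by_contra hxC
  obtain ⟨r, hr, hball⟩ := Metric.isOpen_iff.mp hC.isOpen_compl x hxC
  exact (hx r hr).ne' (measure_mono_null hball hμC)

theorem IsFinitelySupported.exists_mSupport_eq [OpensMeasurableSpace X]
    (hμ : IsFinitelySupported μ) :
    ∃ T : Finset X, mSupport μ = T ∧ (μ : Measure X) (T : Set X)ᶜ = 0 := by
  obtain ⟨T, w, hw, -, hμeq⟩ := hμ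
  have hTc : (μ : Measure X) (T : Set X)ᶜ = 0 := by
    rw [hμeq, Measure.finsetSum_apply]
    refine Finset.sum_eq_zero fun x hx => ?_
    simp [Measure.dirac_apply' _ T.finite_toSet.measurableSet.compl, hx]
  refine ⟨T, (mSupport_subset_of_isClosed T.finite_toSet.isClosed hTc).antisymm
    fun x hx => mem_mSupport_of_measure_singleton_pos ?_, hTc⟩
  have hterm : ENNReal.ofReal (w x) * Measure.dirac x {x} ≤ (μ : Measure X) {x} := by
    rw [hμeq, Measure.finsetSum_apply]
    exact Finset.single_le_sum
      (f := fun i => (ENNReal.ofReal (w i) • Measure.dirac i : Measure X) {x})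
      (fun _ _ => zero_le) hx
  refine lt_of_lt_of_le ?_ hterm
  simpa using hw x hx

theorem IsFinitelySupported.mSupport_finite [OpensMeasurableSpace X]
    (hμ : IsFinitelySupported μ) : (mSupport μ).Finite := by
  obtain ⟨T, hT, -⟩ := hμ.exists_mSupport_eq
  exact hT ▸ T.finite_toSet

theorem IsFinitelySupported.measure_compl_mSupport [OpensMeasurableSpace X]
    (hμ : IsFinitelySupported μ) : (μ : Measure X) (mSupport μ)ᶜ = 0 := by
  obtain ⟨T, hT, hTc⟩ := hμ.exists_mSupport_eq
  rwa [hT]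

end Support

section LevyProkhorov

variable {X : Type*} [MetricSpace X] [MeasurableSpace X] {s : ℝ} {μ ν : ProbabilityMeasure X}

def admissibleRadii (s : ℝ) (μ ν : ProbabilityMeasure X) : Set ℝ :=
  {ε : ℝ | 0 < ε ∧ ∀ A : Set X, MeasurableSet A →
    ENNReal.ofReal s * (μ : Measure X) A ≤
      ENNReal.ofReal s * (ν : Measure X) (thickening ε A) + ENNReal.ofReal ε}

theorem LPsdist_eq_sInf_admissibleRadii : LPsdist s μ ν = sInf (admissibleRadii s μ ν) := rfl

theorem bddBelow_admissibleRadii : BddBelow (admissibleRadii s μ ν) :=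
  ⟨0, fun _ hε => hε.1.le⟩

theorem LPsdist_nonneg : 0 ≤ LPsdist s μ ν := by
  rw [LPsdist_eq_sInf_admissibleRadii]
  exact Real.sInf_nonneg fun _ hε => hε.1.le

theorem max_one_mem_admissibleRadii : max s 1 ∈ admissibleRadii s μ ν := by
  refine ⟨lt_max_of_lt_right one_pos, fun A _ => ?_⟩
  calc ENNReal.ofReal s * (μ : Measure X) A ≤ ENNReal.ofReal s * 1 := by gcongr; exact prob_le_one
    _ ≤ ENNReal.ofReal (max s 1) := by rw [mul_one]; exact ENNReal.ofReal_le_ofReal (le_max_left _ _)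
    _ ≤ _ := le_add_self

theorem mem_admissibleRadii_of_le {ε ε' : ℝ} (hε : ε ∈ admissibleRadii s μ ν) (hεε' : ε ≤ ε') :
    ε' ∈ admissibleRadii s μ ν :=
  ⟨hε.1.trans_le hεε', fun A hA => (hε.2 A hA).trans <|
    add_le_add (by gcongr) (ENNReal.ofReal_le_ofReal hεε')⟩

theorem mem_admissibleRadii_of_LPsdist_lt {ε : ℝ} (hε : LPsdist s μ ν < ε) :
    ε ∈ admissibleRadii s μ ν := by
  rw [LPsdist_eq_sInf_admissibleRadii] at hε
  obtain ⟨e, he, heε⟩ := (csInf_lt_iff bddBelow_admissibleRadii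
    ⟨_, max_one_mem_admissibleRadii⟩).mp hε
  exact mem_admissibleRadii_of_le he heε.le

theorem LPsdist_le_of_forall_subset {S : Set X} (hS : (μ : Measure X) Sᶜ = 0) {ε : ℝ}
    (hε : 0 < ε) (h : ∀ A ⊆ S, ENNReal.ofReal s * (μ : Measure X) A ≤
      ENNReal.ofReal s * (ν : Measure X) (closure (thickening ε A)) + ENNReal.ofReal ε) :
    LPsdist s μ ν ≤ ε := by
  rw [LPsdist_eq_sInf_admissibleRadii]
  refine le_of_forall_gt_imp_ge_of_dense fun ε' hε' =>
    csInf_le bddBelow_admissibleRadii ⟨hε.trans hε', fun A _ => ?_⟩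
  have hsub : closure (thickening ε (A ∩ S)) ⊆ thickening ε' A :=
    (closure_thickening_subset_cthickening ε _).trans <|
      (cthickening_subset_thickening' (hε.trans hε') hε' _).trans
        (thickening_subset_of_subset _ inter_subset_left)
  calc ENNReal.ofReal s * (μ : Measure X) A
      = ENNReal.ofReal s * (μ : Measure X) (A ∩ S) := by rw [measure_inter_conull hS]
    _ ≤ ENNReal.ofReal s * (ν : Measure X) (closure (thickening ε (A ∩ S)))
          + ENNReal.ofReal ε := h _ inter_subset_right
    _ ≤ ENNReal.ofReal s * (ν : Measure X) (thickening ε' A) + ENNReal.ofReal ε' :=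
        add_le_add (by gcongr) (ENNReal.ofReal_le_ofReal hε'.le)

variable [OpensMeasurableSpace X]

theorem mul_measure_le_mul_measure_cthickening_LPsdist_add {A : Set X} (hA : MeasurableSet A) :
    ENNReal.ofReal s * (μ : Measure X) A ≤
      ENNReal.ofReal s * (ν : Measure X) (cthickening (LPsdist s μ ν) A) +
        ENNReal.ofReal (LPsdist s μ ν) :=
  le_mul_measure_cthickening_add_of_forall_lt _ ofReal_ne_top LPsdist_nonneg
    fun _ hε => (mem_admissibleRadii_of_LPsdist_lt hε).2 A hA

theorem LPsdist_pos [BorelSpace X] (hs : 0 < s) (hne : ν ≠ μ) : 0 < LPsdist s μ ν := by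
  refine LPsdist_nonneg.lt_of_ne fun hzero => hne (Eq.symm ?_)
  refine ProbabilityMeasure.eq_of_forall_isClosed_le fun C hC => ?_
  have h := mul_measure_le_mul_measure_cthickening_LPsdist_add (s := s) (μ := μ) (ν := ν)
    hC.measurableSet
  rw [← hzero, cthickening_zero, hC.closure_eq, ENNReal.ofReal_zero, add_zero] at h
  exact (ENNReal.mul_le_mul_iff_right (ENNReal.ofReal_pos.2 hs).ne' ofReal_ne_top).mp h

end LevyProkhorov

theorem LPsdist_isLeast_general {X : Type*} [NormedAddCommGroup X] [NormedSpace ℝ X]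
    [MeasurableSpace X] [BorelSpace X]
    (s : ℝ) (hs : 0 < s)
    (μ ν : ProbabilityMeasure X) (hμ : IsFinitelySupported μ) (hne : ν ≠ μ) :
    IsLeast {ε : ℝ | 0 < ε ∧ ∀ A : Set X, A ⊆ mSupport μ →
        ENNReal.ofReal s * (μ : Measure X) A ≤
          ENNReal.ofReal s * (ν : Measure X) (closure (thickening ε A)) + ENNReal.ofReal ε}
      (LPsdist s μ ν) := by
  have hpos := LPsdist_pos hs hne
  refine ⟨⟨hpos, fun A hA => ?_⟩,
    fun ε hε => LPsdist_le_of_forall_subset hμ.measure_compl_mSupport hε.1 hε.2⟩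
  rw [closure_thickening hpos]
  exact mul_measure_le_mul_measure_cthickening_LPsdist_add
    (hμ.mSupport_finite.subset hA).measurableSet

/-- Lemma 3.4 (second part): for a finitely supported `μ` and any `ν ≠ μ`, the
`s`-Lévy–Prokhorov distance is attained as the minimum of the set of `ε > 0` such that
`s·μ(A) ≤ s·ν(closure(A^ε)) + ε` for every `A ⊆ S_μ`. -/
theorem LPsdist_isLeast {X : Type*} [NormedAddCommGroup X] [NormedSpace ℝ X]
    [CompleteSpace X] [SeparableSpace X] [MeasurableSpace X] [BorelSpace X]
    (s : ℝ) (hs : 0 < s)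
    (μ ν : ProbabilityMeasure X) (hμ : IsFinitelySupported μ) (hne : ν ≠ μ) :
    IsLeast {ε : ℝ | 0 < ε ∧ ∀ A : Set X, A ⊆ mSupport μ →
        ENNReal.ofReal s * (μ : Measure X) A ≤
          ENNReal.ofReal s * (ν : Measure X) (closure (thickening ε A)) + ENNReal.ofReal ε}
      (LPsdist s μ ν) :=
  LPsdist_isLeast_general s hs μ ν hμ hne
end

section
/- Let (X,‖·‖) be a separable real Banach space, s > 0, let μ ∈ F_X with #S_μ ≤ 2 and let ν ∈ P_X. If the s-witness functions coincide, i.e., W_{s,μ}(x) = W_{s,ν}(x) for all x ∈ X, then μ = ν. -/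
open MeasureTheory Metric Set TopologicalSpace

/-!
Write `μ = a δ_p + b δ_q`. If `μ` lives on a closed convex set `K` and `z ∉ K`, separate `z`
from `K` by a functional `f` and move from `z` in a direction almost norming `f`: this gives
points `y` with `ball z θ ⊆ ball y ε` while `K` stays farther than `ε` from `y`, for every
`ε < s`. There `W_{s,μ}(y) > ε`, so `W_{s,ν}(y) > ε` bounds `ν (ball z θ)` by `1 - ε / s`;
letting `ε → s`, `ν` vanishes near `z`. Hence `ν` also lives on the segment `[p, q]`.
At the point `x` beyond `p` on the line `qp` with `dist x p = s b`, `W_{s,μ}(x) ≤ s b`, and the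
segment meets `ball x (s b + η)` only inside `closedBall p η`; so `ν {p} ≥ a`, likewise
`ν {q} ≥ b`, and `a + b = 1` forces `ν = μ`.
-/

open Filter Topology
open scoped ENNReal

section Witness

variable {X : Type*} [MetricSpace X] [MeasurableSpace X] {s ε r : ℝ} {ρ : ProbabilityMeasure X}
  {x : X}

theorem switness_eq_sInf [MeasurableSingletonClass X] (hs : 0 ≤ s) :
    switness s ρ x = sInf {ε | 0 < ε ∧ s ≤ s * (ρ : Measure X).real (ball x ε) + ε} := by
  have hreal : ∀ {ε : ℝ} {B : Set X}, 0 < ε →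
      (ENNReal.ofReal s ≤ ENNReal.ofReal s * (ρ : Measure X) B + ENNReal.ofReal ε ↔
        s ≤ s * (ρ : Measure X).real B + ε) := fun hε => by
    rw [← ofReal_measureReal, ← ENNReal.ofReal_mul hs,
      ← ENNReal.ofReal_add (by positivity) hε.le, ENNReal.ofReal_le_ofReal_iff (by positivity)]
  refine congrArg sInf (Set.ext fun ε => and_congr_right fun hε => ⟨fun h => ?_, fun h A hA => ?_⟩)
  · simpa [diracPM, thickening_singleton, hreal hε] using h {x} (measurableSet_singleton x)
  · by_cases hxA : x ∈ A
    · rw [diracPM, ProbabilityMeasure.coe_mk, Measure.dirac_apply_of_mem hxA, mul_one]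
      exact ((hreal hε).2 h).trans (by gcongr; exact ball_subset_thickening hxA ε)
    · simp [diracPM, Measure.dirac_apply' x hA, hxA]

variable [MeasurableSingletonClass X]

theorem switness_le_of_le_add (hs : 0 ≤ s) (hε : 0 < ε)
    (h : s ≤ s * (ρ : Measure X).real (ball x ε) + ε) : switness s ρ x ≤ ε := by
  rw [switness_eq_sInf hs]
  exact csInf_le ⟨0, fun _ h => h.1.le⟩ ⟨hε, h⟩

theorem add_lt_of_lt_switness (hs : 0 ≤ s) (hε : 0 < ε) (h : ε < switness s ρ x) :
    s * (ρ : Measure X).real (ball x ε) + ε < s :=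
  lt_of_not_ge fun h' => (switness_le_of_le_add hs hε h').not_gt h

theorem le_add_of_switness_lt (hs : 0 < s) (h : switness s ρ x < ε) :
    s ≤ s * (ρ : Measure X).real (ball x ε) + ε := by
  rw [switness_eq_sInf hs.le] at h
  obtain ⟨δ, ⟨-, hδ⟩, hδε⟩ := exists_lt_of_csInf_lt
    (by exact ⟨s, hs, le_add_of_nonneg_left (mul_nonneg hs.le measureReal_nonneg)⟩) h
  have : (ρ : Measure X).real (ball x δ) ≤ (ρ : Measure X).real (ball x ε) :=
    measureReal_mono (ball_subset_ball hδε.le)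
  nlinarith

theorem min_le_switness_of_ae_mem {S : Set X} (hs : 0 < s) (hS : ∀ᵐ v ∂(ρ : Measure X), v ∈ S)
    (h : ∀ v ∈ S, r ≤ dist x v) : min s r ≤ switness s ρ x := by
  rw [switness_eq_sInf hs.le]
  refine le_csInf ⟨s, hs, le_add_of_nonneg_left (mul_nonneg hs.le measureReal_nonneg)⟩
    fun ε ⟨hε, hεs⟩ => le_of_not_gt fun hlt => ?_
  have hnull : (ρ : Measure X) (ball x ε) = 0 :=
    measure_eq_zero_iff_ae_notMem.2 <| hS.mono fun v hv hvb =>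
      (mem_ball'.1 hvb).not_ge ((hlt.le.trans (min_le_right _ _)).trans (h v hv))
  rw [measureReal_def, hnull, ENNReal.toReal_zero, mul_zero, zero_add] at hεs
  exact hεs.not_gt (hlt.trans_le (min_le_left _ _))

theorem switness_le_max_dist (hs : 0 ≤ s) (p : X) :
    switness s ρ x ≤ max (dist x p) (s * (1 - (ρ : Measure X).real {p})) := by
  refine le_of_forall_gt_imp_ge_of_dense fun ε hε => ?_
  have hp : (ρ : Measure X).real {p} ≤ (ρ : Measure X).real (ball x ε) :=
    measureReal_mono (singleton_subset_iff.2 (mem_ball'.2 ((le_max_left _ _).trans_lt hε)))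
  refine switness_le_of_le_add hs (dist_nonneg.trans_lt ((le_max_left _ _).trans_lt hε)) ?_
  nlinarith [le_max_right (dist x p) (s * (1 - (ρ : Measure X).real {p}))]

theorem le_measureReal_singleton_of_switness_le [OpensMeasurableSpace X] (hs : 0 < s) {p : X}
    {a : ℝ} (hx : switness s ρ x ≤ s * (1 - a))
    (hball : ∀ η > 0, ball x (s * (1 - a) + η) ≤ᵐ[(ρ : Measure X)] closedBall p η) :
    a ≤ (ρ : Measure X).real {p} := by
  have hbound : ∀ η > 0, s * a - η ≤ s * (ρ : Measure X).real (closedBall p η) := fun η hη => by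
    have h := le_add_of_switness_lt hs (hx.trans_lt (lt_add_of_pos_right _ hη))
    have hmono := ENNReal.toReal_mono (measure_ne_top _ _) (measure_mono_ae (hball η hη))
    rw [← measureReal_def, ← measureReal_def] at hmono
    nlinarith
  have hlim : Tendsto (fun η => (ρ : Measure X).real (closedBall p η)) (𝓝[>] 0)
      (𝓝 ((ρ : Measure X).real {p})) := by
    refine ((ENNReal.tendsto_toReal (measure_ne_top _ _)).comp
      ((tendsto_measure_cthickening_of_isClosed ⟨1, one_pos, measure_ne_top _ _⟩
        isClosed_singleton).mono_left nhdsWithin_le_nhds)).congr' ?_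
    filter_upwards [self_mem_nhdsWithin] with η hη
    simp [cthickening_singleton _ hη.le, measureReal_def]
  have h : s * a - 0 ≤ s * (ρ : Measure X).real {p} :=
    le_of_tendsto_of_tendsto ((tendsto_nhdsWithin_of_tendsto_nhds tendsto_id).const_sub _)
      (hlim.const_mul s) (eventually_nhdsWithin_of_forall hbound)
  nlinarith

end Witness

section Geometry

variable {E : Type*} [NormedAddCommGroup E] [NormedSpace ℝ E]

theorem ContinuousLinearMap.exists_norm_lt_one_lt_apply (f : E →L[ℝ] ℝ) {c : ℝ} (hc : c < ‖f‖) :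
    ∃ e : E, ‖e‖ < 1 ∧ c < f e := by
  obtain ⟨e, he, hfe⟩ := f.exists_lt_apply_of_lt_opNorm hc
  rcases lt_abs.1 hfe with h | h
  · exact ⟨e, he, h⟩
  · exact ⟨-e, by rwa [norm_neg], by rwa [map_neg]⟩

theorem exists_forall_add_le_dist_of_notMem {K : Set E} (hKc : Convex ℝ K) (hK : IsClosed K)
    {z : E} (hz : z ∉ K) {L : ℝ} (hL : 0 < L) :
    ∃ δ > 0, ∀ t ∈ Icc 0 L, ∃ y, dist y z ≤ t ∧ ∀ v ∈ K, t + δ ≤ dist y v := by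
  rcases K.eq_empty_or_nonempty with rfl | ⟨v₀, hv₀⟩
  · exact ⟨1, one_pos, fun t ht => ⟨z, by simpa using ht.1, by simp⟩⟩
  obtain ⟨f, u, hfK, hfz⟩ := geometric_hahn_banach_closed_point hKc hK hz
  have hf : 0 < ‖f‖ := norm_pos_iff.2 fun h => by
    have := hfK v₀ hv₀
    simp [h] at this hfz
    linarith
  set Θ := f z - u
  have hΘ : 0 < Θ := sub_pos.2 hfz
  obtain ⟨e, he, hfe⟩ := f.exists_norm_lt_one_lt_apply (c := ‖f‖ - Θ / (2 * L)) (by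
    have : 0 < Θ / (2 * L) := by positivity
    linarith)
  -- Along the almost norming direction `e`, `f` grows almost as fast as the norm does.
  refine ⟨Θ / (2 * ‖f‖), by positivity, fun t ⟨ht₀, htL⟩ => ⟨z + t • e, ?_, fun v hv => ?_⟩⟩
  · rw [dist_eq_norm, add_sub_cancel_left, norm_smul, Real.norm_of_nonneg ht₀]
    exact mul_le_of_le_one_right ht₀ he.le
  · have hlip : f (z + t • e - v) ≤ ‖f‖ * dist (z + t • e) v := by
      rw [dist_eq_norm]
      exact (le_abs_self _).trans (f.le_opNorm _)
    have hgrow : f (z + t • e - v) = Θ + (u - f v) + t * f e := by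
      simp only [map_sub, map_add, map_smul, smul_eq_mul, Θ]
      ring
    have htΘ : t * (Θ / (2 * L)) ≤ Θ / 2 := by
      rw [mul_div_assoc', div_le_div_iff₀ (by positivity) two_pos]
      nlinarith
    have hfv := hfK v hv
    have h1 : ‖f‖ * (t + Θ / (2 * ‖f‖)) = t * ‖f‖ + Θ / 2 := by field_simp
    have h2 : t * (‖f‖ - Θ / (2 * L)) ≤ t * f e := mul_le_mul_of_nonneg_left hfe.le ht₀
    refine le_of_mul_le_mul_left ?_ hf
    nlinarith

theorem exists_forall_dist_eq_dist_add {p q : E} (hpq : p ≠ q) {r : ℝ} (hr : 0 ≤ r) :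
    ∃ x, dist x p = r ∧ ∀ v ∈ segment ℝ q p, dist v x = dist v p + r := by
  have hd : 0 < ‖p - q‖ := norm_pos_iff.2 (sub_ne_zero.2 hpq)
  refine ⟨p + (r / ‖p - q‖) • (p - q), ?_, ?_⟩
  · rw [dist_eq_norm, add_sub_cancel_left, norm_smul, Real.norm_of_nonneg (by positivity)]
    field_simp
  · rw [segment_eq_image']
    rintro _ ⟨t, ⟨-, ht⟩, rfl⟩
    have hvx : q + t • (p - q) - (p + (r / ‖p - q‖) • (p - q)) =
        (-(1 - t + r / ‖p - q‖)) • (p - q) := by module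
    have hvp : q + t • (p - q) - p = (-(1 - t)) • (p - q) := by module
    have : 0 ≤ r / ‖p - q‖ := by positivity
    rw [dist_eq_norm, dist_eq_norm, hvx, hvp, norm_smul, norm_smul, norm_neg, norm_neg,
      Real.norm_of_nonneg (by linarith : 0 ≤ 1 - t + r / ‖p - q‖),
      Real.norm_of_nonneg (by linarith : 0 ≤ 1 - t)]
    field_simp

end Geometry

section Concentration

variable {X : Type*} [NormedAddCommGroup X] [NormedSpace ℝ X] [MeasurableSpace X]
  [BorelSpace X] {s : ℝ} {μ ν : ProbabilityMeasure X} {K : Set X}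

theorem exists_measure_ball_eq_zero_of_switness_eq (hs : 0 < s)
    (hW : ∀ x, switness s μ x = switness s ν x) (hKc : Convex ℝ K) (hK : IsClosed K)
    (hμK : ∀ᵐ v ∂(μ : Measure X), v ∈ K) {z : X} (hz : z ∉ K) :
    ∃ θ > 0, (ν : Measure X) (ball z θ) = 0 := by
  obtain ⟨δ, hδ, hfar⟩ := exists_forall_add_le_dist_of_notMem hKc hK hz hs
  set θ := min (δ / 2) (s / 2)
  have hθδ : θ < δ := (min_le_left _ _).trans_lt (half_lt_self hδ)
  have hθs : θ < s := (min_le_right _ _).trans_lt (half_lt_self hs)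
  have hθ : 0 < θ := lt_min (half_pos hδ) (half_pos hs)
  -- Far from `K`, the witness function of `μ` is close to `s`, hence so is that of `ν`:
  -- then `ν` has almost no mass near the witness point `y`, and `ball z θ` lies inside.
  have hsmall : ∀ ε ∈ Ioo θ s, s * (ν : Measure X).real (ball z θ) ≤ s - ε := by
    rintro ε ⟨hθε, hεs⟩
    obtain ⟨y, hyz, hyK⟩ := hfar (ε - θ) ⟨by linarith, by linarith⟩
    have hεW : ε < switness s ν y := by
      rw [← hW]
      exact (lt_min hεs (by linarith)).trans_le (min_le_switness_of_ae_mem hs hμK hyK)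
    have hsub : ball z θ ⊆ ball y ε := ball_subset_ball' (by rw [dist_comm]; linarith)
    have := add_lt_of_lt_switness hs.le (hθ.trans hθε) hεW
    nlinarith [measureReal_mono hsub (μ := (ν : Measure X))]
  have hle : s * (ν : Measure X).real (ball z θ) ≤ s - s :=
    ge_of_tendsto (tendsto_nhdsWithin_of_tendsto_nhds (tendsto_id.const_sub s))
      (Filter.mem_of_superset (Ioo_mem_nhdsLT hθs) hsmall)
  rw [sub_self] at hle
  exact ⟨θ, hθ, (measureReal_eq_zero_iff).1
    (le_antisymm (nonpos_of_mul_nonpos_right hle hs) measureReal_nonneg)⟩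

theorem ae_mem_of_switness_eq [SecondCountableTopology X] (hs : 0 < s)
    (hW : ∀ x, switness s μ x = switness s ν x) (hKc : Convex ℝ K) (hK : IsClosed K)
    (hμK : ∀ᵐ v ∂(μ : Measure X), v ∈ K) : ∀ᵐ v ∂(ν : Measure X), v ∈ K :=
  measure_null_of_locally_null _ fun z hz =>
    let ⟨θ, hθ, hnull⟩ := exists_measure_ball_eq_zero_of_switness_eq hs hW hKc hK hμK hz
    ⟨ball z θ, mem_nhdsWithin_of_mem_nhds (ball_mem_nhds z hθ), hnull⟩

end Concentration

section TwoPoint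

variable {X : Type*} [NormedAddCommGroup X] [NormedSpace ℝ X] [MeasurableSpace X]
  [BorelSpace X] {s : ℝ} {μ ν : ProbabilityMeasure X}

theorem measureReal_singleton_le_of_ae_mem_segment [SecondCountableTopology X] (hs : 0 < s)
    (hW : ∀ x, switness s μ x = switness s ν x) {p q : X}
    (hμ : ∀ᵐ v ∂(μ : Measure X), v ∈ segment ℝ p q) :
    (μ : Measure X).real {p} ≤ (ν : Measure X).real {p} := by
  have hν := ae_mem_of_switness_eq hs hW (convex_segment p q)
    (by simpa only [convexHull_pair] using (toFinite {p, q}).isClosed_convexHull ℝ) hμ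
  rcases eq_or_ne p q with rfl | hpq
  · rw [segment_same] at hν
    refine measureReal_le_one.trans_eq ?_
    rw [measureReal_def, (mem_ae_iff_prob_eq_one (measurableSet_singleton p)).1 hν,
      ENNReal.toReal_one]
  -- Seen from `x`, beyond `p` on the line `qp`, the atom at `q` hides behind the atom at `p`.
  obtain ⟨x, hxp, hx⟩ := exists_forall_dist_eq_dist_add hpq
    (mul_nonneg hs.le (sub_nonneg.2 measureReal_le_one) : 0 ≤ s * (1 - (μ : Measure X).real {p}))
  refine le_measureReal_singleton_of_switness_le (x := x) hs ?_ fun η hη => ?_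
  · simpa only [← hW, hxp, max_self] using switness_le_max_dist hs.le p (ρ := μ) (x := x)
  · rw [segment_symm] at hν
    filter_upwards [hν] with v hv (hvx : v ∈ ball x _)
    rw [mem_ball, hx v hv] at hvx
    exact mem_closedBall.2 (by linarith)

end TwoPoint

theorem Finset.exists_subset_pair_of_card_le_two {α : Type*} [DecidableEq α] {F : Finset α}
    (hF : F.card ≤ 2) {p : α} (hp : p ∈ F) : ∃ q, F ⊆ {p, q} := by
  have : Nonempty α := ⟨p⟩
  obtain ⟨q, hq⟩ := card_le_one_iff_subset_singleton.1
    (by rw [card_erase_of_mem hp]; omega : (F.erase p).card ≤ 1)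
  exact ⟨q, (insert_erase hp).symm.subset.trans (Finset.insert_subset_insert p hq)⟩

section FiniteSupport

variable {X : Type*} [MeasurableSpace X] [MeasurableSingletonClass X] {F : Finset X}
  {c : X → ℝ≥0∞} {μ ν : Measure X}

theorem ae_mem_of_eq_sum_smul_dirac (h : μ = ∑ x ∈ F, c x • Measure.dirac x) :
    ∀ᵐ v ∂μ, v ∈ F := by
  rw [h, ae_iff, Measure.finsetSum_apply]
  exact Finset.sum_eq_zero fun x hx => by simp [hx]

theorem le_measure_singleton_of_eq_sum_smul_dirac (h : μ = ∑ x ∈ F, c x • Measure.dirac x)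
    {x : X} (hx : x ∈ F) : c x ≤ μ {x} := by
  rw [h, Measure.finsetSum_apply]
  simpa using Finset.single_le_sum (f := fun y => (c y • Measure.dirac y) {x})
    (fun _ _ => zero_le) hx

theorem MeasureTheory.Measure.le_of_ae_mem_finset (hF : ∀ᵐ v ∂μ, v ∈ F)
    (h : ∀ x ∈ F, μ {x} ≤ ν {x}) : μ ≤ ν := by
  classical
  refine Measure.le_iff'.2 fun A => ?_
  calc μ A = μ (A ∩ F) := (measure_inter_conull hF).symm
    _ = ∑ x ∈ F.filter (· ∈ A), μ {x} := by
      rw [sum_measure_singleton]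
      congr 1
      ext
      simp [and_comm]
    _ ≤ ∑ x ∈ F.filter (· ∈ A), ν {x} :=
      Finset.sum_le_sum fun x hx => h x (Finset.mem_filter.1 hx).1
    _ ≤ ν A := by
      rw [sum_measure_singleton]
      exact measure_mono fun x hx => (Finset.mem_filter.1 hx).2

end FiniteSupport

theorem mem_mSupport_of_measure_singleton_pos_s17 {X : Type*} [MetricSpace X] [MeasurableSpace X]
    {μ : ProbabilityMeasure X} {x : X} (h : 0 < (μ : Measure X) {x}) : x ∈ mSupport μ :=
  fun _ hr => h.trans_le (measure_mono (singleton_subset_iff.2 (mem_ball_self hr)))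

theorem switness_determines_two_point_general {X : Type*} [NormedAddCommGroup X] [NormedSpace ℝ X]
    [SeparableSpace X] [MeasurableSpace X] [BorelSpace X]
    (s : ℝ) (hs : 0 < s)
    (μ : ProbabilityMeasure X) (hμ : IsFinitelySupported μ)
    (hcard : (mSupport μ).encard ≤ 2)
    (ν : ProbabilityMeasure X)
    (hW : ∀ x : X, switness s μ x = switness s ν x) :
    μ = ν := by
  classical
  have := UniformSpace.secondCountable_of_separable X
  obtain ⟨F, w, hw, -, hμF⟩ := hμ
  have hFμ := ae_mem_of_eq_sum_smul_dirac hμF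
  have hF : F.card ≤ 2 := by
    have hsub : (F : Set X) ⊆ mSupport μ := fun x hx =>
      mem_mSupport_of_measure_singleton_pos_s17 <| (ENNReal.ofReal_pos.2 (hw x hx)).trans_le
        (le_measure_singleton_of_eq_sum_smul_dirac hμF hx)
    exact_mod_cast (Set.encard_coe_eq_coe_finsetCard F) ▸ (Set.encard_mono hsub).trans hcard
  refine ProbabilityMeasure.toMeasure_injective <| Measure.eq_of_le_of_isProbabilityMeasure <|
    Measure.le_of_ae_mem_finset hFμ fun p hp => ?_
  obtain ⟨q, hpq⟩ := F.exists_subset_pair_of_card_le_two hF hp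
  have hμpq : ∀ᵐ v ∂(μ : Measure X), v ∈ segment ℝ p q := hFμ.mono fun v hv => by
    rcases Finset.mem_insert.1 (hpq hv) with rfl | hvq
    · exact left_mem_segment ℝ v q
    · exact Finset.mem_singleton.1 hvq ▸ right_mem_segment ℝ p q
  exact (ENNReal.toReal_le_toReal (measure_ne_top _ _) (measure_ne_top _ _)).1
    (measureReal_singleton_le_of_ae_mem_segment hs hW hμpq)

/-- Consequence in Lemma 3.5: a finitely supported measure with at most two points in its
support is determined by its `s`-witness function. -/
theorem switness_determines_two_point {X : Type*} [NormedAddCommGroup X] [NormedSpace ℝ X]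
    [CompleteSpace X] [SeparableSpace X] [MeasurableSpace X] [BorelSpace X]
    (s : ℝ) (hs : 0 < s)
    (μ : ProbabilityMeasure X) (hμ : IsFinitelySupported μ)
    (hcard : (mSupport μ).encard ≤ 2)
    (ν : ProbabilityMeasure X)
    (hW : ∀ x : X, switness s μ x = switness s ν x) :
    μ = ν :=
  switness_determines_two_point_general s hs μ hμ hcard ν hW
end
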